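/- arXiv:2407.08896 — 13 statements merged into one kernel-verified Lean document; each statement's English description precedes it below -/
import Mathlib

section
/- Let m ≥ 2 be an integer and let g : I → ℝ and h : J → ℝ be smooth functions on nonempty open intervals I, J with g'(u) ≠ 0 for all u ∈ I and h'(v) ≠ 0 for all v ∈ J. Suppose that for all (u,v) ∈ I × J the translation minimal-surface equation (h'(v)^{(2m−2)/(2m−1)} + h'(v)²)·g''(u) + (g'(u)^{(2m−2)/(2m−1)} + g'(u)²)·h''(v) = 0 holds. Then there exists a constant a ∈ ℝ such that g''(u) = a·(g'(u)^{(2m−2)/(2m−1)} + g'(u)²) for all u ∈ I and h''(v) = −a·(h'(v)^{(2m−2)/(2m−1)} + h'(v)²) for all v ∈ J. -/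
/-- `rootPow m x k` is `x^{k/(2m-1)}`, i.e. the `k`-th power of the real
`(2m-1)`-th root of `x`, defined as `(sgn(x) * |x|^(1/(2m-1)))^k`. -/
noncomputable def rootPow (m : ℕ) (x : ℝ) (k : ℕ) : ℝ :=
  (Real.sign x * |x| ^ ((2 * (m : ℝ) - 1)⁻¹)) ^ k

lemma rootPow_coeff_pos (m : ℕ) (hm : 2 ≤ m) {x : ℝ} (hx : x ≠ 0) :
    0 < rootPow m x (2 * m - 2) + x ^ 2 := by
  have h1 : 0 ≤ rootPow m x (2 * m - 2) := by
    have : Even (2 * m - 2) := ⟨m - 1, by omega⟩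
    exact this.pow_nonneg _
  have h2 : 0 < x ^ 2 := by positivity
  linarith

theorem translation_minimal_surface_separation
    (m : ℕ) (hm : 2 ≤ m) (I J : Set ℝ)
    (hI : IsOpen I) (hJ : IsOpen J)
    (hIc : IsPreconnected I) (hJc : IsPreconnected J)
    (hIne : I.Nonempty) (hJne : J.Nonempty)
    (g h : ℝ → ℝ) (hg : ContDiffOn ℝ (⊤ : ℕ∞) g I) (hh : ContDiffOn ℝ (⊤ : ℕ∞) h J)
    (hg' : ∀ u ∈ I, deriv g u ≠ 0) (hh' : ∀ v ∈ J, deriv h v ≠ 0)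
    (hmin : ∀ u ∈ I, ∀ v ∈ J,
      (rootPow m (deriv h v) (2 * m - 2) + (deriv h v) ^ 2) * deriv (deriv g) u
        + (rootPow m (deriv g u) (2 * m - 2) + (deriv g u) ^ 2) * deriv (deriv h) v = 0) :
    ∃ a : ℝ,
      (∀ u ∈ I, deriv (deriv g) u
          = a * (rootPow m (deriv g u) (2 * m - 2) + (deriv g u) ^ 2)) ∧
      (∀ v ∈ J, deriv (deriv h) v
          = -a * (rootPow m (deriv h v) (2 * m - 2) + (deriv h v) ^ 2)) := by
  obtain ⟨u₀, hu₀⟩ := hIne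
  obtain ⟨v₀, hv₀⟩ := hJne
  set P : ℝ → ℝ := fun v => rootPow m (deriv h v) (2 * m - 2) + (deriv h v) ^ 2 with hP
  set Q : ℝ → ℝ := fun u => rootPow m (deriv g u) (2 * m - 2) + (deriv g u) ^ 2 with hQ
  have hPpos : ∀ v ∈ J, 0 < P v := fun v hv => rootPow_coeff_pos m hm (hh' v hv)
  have hQpos : ∀ u ∈ I, 0 < Q u := fun u hu => rootPow_coeff_pos m hm (hg' u hu)
  refine ⟨-deriv (deriv h) v₀ / P v₀, ?_, ?_⟩
  · intro u hu
    have h1 : P v₀ * deriv (deriv g) u + Q u * deriv (deriv h) v₀ = 0 := hmin u hu v₀ hv₀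
    have hP0 := (hPpos v₀ hv₀).ne'
    show deriv (deriv g) u = -deriv (deriv h) v₀ / P v₀ * Q u
    field_simp
    linarith
  · intro v hv
    have h1 : P v * deriv (deriv g) u₀ + Q u₀ * deriv (deriv h) v = 0 := hmin u₀ hu₀ v hv
    have h2 : P v₀ * deriv (deriv g) u₀ + Q u₀ * deriv (deriv h) v₀ = 0 := hmin u₀ hu₀ v₀ hv₀
    have hP0 := (hPpos v₀ hv₀).ne'
    have hQ0 := (hQpos u₀ hu₀).ne'
    have hPv := (hPpos v hv).ne'
    -- from h2 : deriv (deriv g) u₀ = (-deriv (deriv h) v₀ / P v₀) * Q u₀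
    have hgu : deriv (deriv g) u₀ = (-deriv (deriv h) v₀ / P v₀) * Q u₀ := by
      field_simp
      linarith
    rw [hgu] at h1
    show deriv (deriv h) v = -(-deriv (deriv h) v₀ / P v₀) * P v
    have key : Q u₀ * (deriv (deriv h) v - (-(-deriv (deriv h) v₀ / P v₀) * P v)) = 0 := by
      field_simp
      field_simp at h1
      linarith
    rcases mul_eq_zero.mp key with h' | h'
    · exact absurd h' hQ0
    · linarith [sub_eq_zero.mp h']
end

section
/- Let m ≥ 2 be an integer and a ≠ 0 a real constant. Let σ : I → ℝ and τ : J → ℝ be smooth functions on open intervals, nowhere zero, satisfying σ'(u) = (a/(2m−1))·(1 + σ(u)^{2m}) and τ'(v) = (−a/(2m−1))·(1 + τ(v)^{2m}). Let g : I → ℝ and h : J → ℝ be smooth with g'(u) = σ(u)^{2m−1} and h'(v) = τ(v)^{2m−1}. Then for all (u,v) ∈ I × J the translation minimal-surface equation (h'(v)^{(2m−2)/(2m−1)} + h'(v)²)·g''(u) + (g'(u)^{(2m−2)/(2m−1)} + g'(u)²)·h''(v) = 0 holds. -/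
lemma sign_odd_pow (s : ℝ) (n : ℕ) (hn : Odd n) :
    Real.sign (s ^ n) = Real.sign s := by
  rcases lt_trichotomy s 0 with hs | hs | hs
  · rw [Real.sign_of_neg hs, Real.sign_of_neg (hn.pow_neg hs)]
  · have hn0 : n ≠ 0 := by rintro rfl; simp at hn
    simp [hs, zero_pow hn0]
  · rw [Real.sign_of_pos hs, Real.sign_of_pos (pow_pos hs n)]

lemma sign_mul_abs' (s : ℝ) : Real.sign s * |s| = s := by
  rcases lt_trichotomy s 0 with hs | hs | hs
  · rw [Real.sign_of_neg hs, abs_of_neg hs]; ring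
  · simp [hs]
  · rw [Real.sign_of_pos hs, abs_of_pos hs]; ring

lemma rootPow_odd_pow (m : ℕ) (hm : 2 ≤ m) (s : ℝ) (k : ℕ) :
    rootPow m (s ^ (2 * m - 1)) k = s ^ k := by
  have hodd : Odd (2 * m - 1) := by
    refine ⟨m - 1, by omega⟩
  have hcast : ((2 * m - 1 : ℕ) : ℝ) = 2 * (m : ℝ) - 1 := by
    push_cast [Nat.cast_sub (by omega : 1 ≤ 2 * m)]; ring
  have hne : (2 * (m : ℝ) - 1) ≠ 0 := by
    have : (2 : ℝ) ≤ (m : ℝ) := by exact_mod_cast hm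
    nlinarith
  unfold rootPow
  have habs : |s ^ (2 * m - 1)| ^ ((2 * (m : ℝ) - 1)⁻¹) = |s| := by
    rw [abs_pow, ← Real.rpow_natCast |s| (2 * m - 1), ← Real.rpow_mul (abs_nonneg s),
      hcast, mul_inv_cancel₀ hne, Real.rpow_one]
  rw [habs, sign_odd_pow s _ hodd, sign_mul_abs']

theorem translation_minimal_surface_construction
    (m : ℕ) (hm : 2 ≤ m) (a : ℝ) (ha : a ≠ 0)
    (I J : Set ℝ) (hI : IsOpen I) (hJ : IsOpen J)
    (hIc : IsPreconnected I) (hJc : IsPreconnected J)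
    (σ τ : ℝ → ℝ) (hσ : ContDiffOn ℝ (⊤ : ℕ∞) σ I) (hτ : ContDiffOn ℝ (⊤ : ℕ∞) τ J)
    (hσ0 : ∀ u ∈ I, σ u ≠ 0) (hτ0 : ∀ v ∈ J, τ v ≠ 0)
    (hσ' : ∀ u ∈ I, deriv σ u = a / (2 * (m : ℝ) - 1) * (1 + σ u ^ (2 * m)))
    (hτ' : ∀ v ∈ J, deriv τ v = -a / (2 * (m : ℝ) - 1) * (1 + τ v ^ (2 * m)))
    (g h : ℝ → ℝ) (hg : ContDiffOn ℝ (⊤ : ℕ∞) g I) (hh : ContDiffOn ℝ (⊤ : ℕ∞) h J)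
    (hg' : ∀ u ∈ I, deriv g u = σ u ^ (2 * m - 1))
    (hh' : ∀ v ∈ J, deriv h v = τ v ^ (2 * m - 1)) :
    ∀ u ∈ I, ∀ v ∈ J,
      (rootPow m (deriv h v) (2 * m - 2) + (deriv h v) ^ 2) * deriv (deriv g) u
        + (rootPow m (deriv g u) (2 * m - 2) + (deriv g u) ^ 2) * deriv (deriv h) v = 0 := by
  intro u hu v hv
  have hne : (2 * (m : ℝ) - 1) ≠ 0 := by
    have : (2 : ℝ) ≤ (m : ℝ) := by exact_mod_cast hm
    nlinarith
  have hcast : ((2 * m - 1 : ℕ) : ℝ) = 2 * (m : ℝ) - 1 := by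
    push_cast [Nat.cast_sub (by omega : 1 ≤ 2 * m)]; ring
  -- second derivative of g
  have hσd : DifferentiableAt ℝ σ u :=
    (hσ.contDiffAt (hI.mem_nhds hu)).differentiableAt (by simp)
  have hτd : DifferentiableAt ℝ τ v :=
    (hτ.contDiffAt (hJ.mem_nhds hv)).differentiableAt (by simp)
  have hgE : deriv g =ᶠ[nhds u] (fun x => σ x ^ (2 * m - 1)) :=
    Filter.eventuallyEq_of_mem (hI.mem_nhds hu) hg'
  have hhE : deriv h =ᶠ[nhds v] (fun x => τ x ^ (2 * m - 1)) :=
    Filter.eventuallyEq_of_mem (hJ.mem_nhds hv) hh'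
  have d2g : deriv (deriv g) u = a * σ u ^ (2 * m - 2) * (1 + σ u ^ (2 * m)) := by
    rw [hgE.deriv_eq, deriv_fun_pow hσd, hσ' u hu]
    have : 2 * m - 1 - 1 = 2 * m - 2 := by omega
    rw [this, hcast]
    field_simp
  have d2h : deriv (deriv h) v = -a * τ v ^ (2 * m - 2) * (1 + τ v ^ (2 * m)) := by
    rw [hhE.deriv_eq, deriv_fun_pow hτd, hτ' v hv]
    have : 2 * m - 1 - 1 = 2 * m - 2 := by omega
    rw [this, hcast]
    field_simp
  rw [d2g, d2h, hg' u hu, hh' v hv, rootPow_odd_pow m hm, rootPow_odd_pow m hm]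
  obtain ⟨k, rfl⟩ : ∃ k, m = k + 2 := ⟨m - 2, by omega⟩
  have e1 : 2 * (k + 2) - 1 = 2 * k + 3 := by omega
  have e2 : 2 * (k + 2) - 2 = 2 * k + 2 := by omega
  have e3 : 2 * (k + 2) = 2 * k + 4 := by omega
  rw [e1, e2, e3]
  ring
end

section
/- Let m ≥ 2 be an integer, let a ≠ 0, b ∈ ℝ and c₂ ≠ 0 be constants, and let h : J → ℝ be a smooth function on an open interval with h(v) ≠ 0 and h'(v) ≠ 0 for all v, satisfying h'(v) = c₂·( a^{(2m−2)/(2m−1)} + a²·h(v)^{2m/(2m−1)} )^{(2m−1)/m} for all v ∈ J. Set g(u) = au + b on ℝ. Then g and h satisfy, for all (u,v) with g(u) ≠ 0, the homothetical minimal-surface equation ((g(u)h'(v))^{(2m−2)/(2m−1)} + (g(u)h'(v))²)·g''(u)h(v) − 2g(u)h(v)g'(u)²h'(v)² + ((g'(u)h(v))^{(2m−2)/(2m−1)} + (g'(u)h(v))²)·g(u)h''(v) = 0. -/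
lemma rootPow_even (m : ℕ) {x : ℝ} (hx : x ≠ 0) {k : ℕ} (hk : Even k) :
    rootPow m x k = |x| ^ ((2 * (m : ℝ) - 1)⁻¹ * k) := by
  unfold rootPow
  rw [mul_pow, ← Real.rpow_natCast (|x| ^ _) k, ← Real.rpow_mul (abs_nonneg x)]
  rcases Real.sign_apply_eq_of_ne_zero x hx with hs | hs <;> rw [hs]
  · rw [hk.neg_one_pow, one_mul]
  · rw [one_pow, one_mul]

lemma real_sign_mul_abs (x : ℝ) : Real.sign x * |x| = x := by
  rcases lt_trichotomy x 0 with hx | rfl | hx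
  · rw [Real.sign_of_neg hx, abs_of_neg hx]; ring
  · simp
  · rw [Real.sign_of_pos hx, abs_of_pos hx]; ring

lemma hasDerivAt_abs' {x : ℝ} (hx : x ≠ 0) : HasDerivAt (fun y : ℝ => |y|) (Real.sign x) x := by
  rcases hx.lt_or_gt with hx | hx
  · rw [Real.sign_of_neg hx]; exact hasDerivAt_abs_neg hx
  · rw [Real.sign_of_pos hx]; exact hasDerivAt_abs_pos hx

theorem homothetical_minimal_surface_construction
    (m : ℕ) (hm : 2 ≤ m) (a b c₂ : ℝ) (ha : a ≠ 0) (hc₂ : c₂ ≠ 0)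
    (J : Set ℝ) (hJ : IsOpen J) (hJc : IsPreconnected J)
    (h : ℝ → ℝ) (hh : ContDiffOn ℝ (⊤ : ℕ∞) h J)
    (hh0 : ∀ v ∈ J, h v ≠ 0) (hh'0 : ∀ v ∈ J, deriv h v ≠ 0)
    (hODE : ∀ v ∈ J, deriv h v
      = c₂ * (rootPow m a (2 * m - 2) + a ^ 2 * rootPow m (h v) (2 * m))
              ^ ((2 * (m : ℝ) - 1) / m))
    (g : ℝ → ℝ) (hgdef : ∀ u : ℝ, g u = a * u + b) :
    ∀ u : ℝ, ∀ v ∈ J, g u ≠ 0 →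
      (rootPow m (g u * deriv h v) (2 * m - 2) + (g u * deriv h v) ^ 2)
          * deriv (deriv g) u * h v
        - 2 * g u * h v * (deriv g u) ^ 2 * (deriv h v) ^ 2
        + (rootPow m (deriv g u * h v) (2 * m - 2) + (deriv g u * h v) ^ 2)
          * g u * deriv (deriv h) v = 0 := by
  -- basic real constants
  have hm1 : (1 : ℝ) ≤ (m : ℝ) := by exact_mod_cast le_trans (by norm_num) hm
  have h2m1 : (0 : ℝ) < 2 * (m : ℝ) - 1 := by linarith
  have hmne : (m : ℝ) ≠ 0 := by positivity
  set p : ℝ := (2 * (m : ℝ) - 1)⁻¹ with hp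
  have hpne : (2 * (m : ℝ) - 1) ≠ 0 := ne_of_gt h2m1
  -- exponents
  set q₀ : ℝ := p * ((2 * m - 2 : ℕ) : ℝ) with hq₀
  set q : ℝ := p * ((2 * m : ℕ) : ℝ) with hq
  set r : ℝ := (2 * (m : ℝ) - 1) / m with hr
  have hcast1 : ((2 * m - 2 : ℕ) : ℝ) = 2 * (m : ℝ) - 2 := by
    have : 2 ≤ 2 * m := by omega
    push_cast [Nat.cast_sub this]; ring
  have hcast2 : ((2 * m : ℕ) : ℝ) = 2 * (m : ℝ) := by push_cast; ring
  have hq₀q : q₀ + q = 2 := by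
    rw [hq₀, hq, hcast1, hcast2, hp]; field_simp; ring
  have hq₀q1 : q₀ + (q - 1) = 1 := by linarith
  have hrq : r * q = 2 := by
    rw [hr, hq, hcast2, hp]; field_simp
  have hEven1 : Even (2 * m - 2) := ⟨m - 1, by omega⟩
  have hEven2 : Even (2 * m) := ⟨m, by omega⟩
  -- g facts
  have hg : g = fun u => a * u + b := funext hgdef
  have hg' : deriv g = fun _ => a := by
    funext u
    rw [hg]
    simpa using (((hasDerivAt_id u).const_mul a).add_const b).deriv
  have hg'' : deriv (deriv g) = fun _ => 0 := by
    rw [hg']; funext u; simp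
  -- constants in the ODE
  have hC₁ : rootPow m a (2 * m - 2) = |a| ^ q₀ := rootPow_even m ha hEven1
  have habs_a : (0 : ℝ) < |a| := abs_pos.2 ha
  intro u v hv hgu
  have hy : h v ≠ 0 := hh0 v hv
  have habs_y : (0 : ℝ) < |h v| := abs_pos.2 hy
  set y : ℝ := h v with hyv
  set s : ℝ := Real.sign y with hs
  set B : ℝ := |a| ^ q₀ + a ^ 2 * |y| ^ q with hB
  have hBpos : 0 < B := by
    have h1 : (0:ℝ) < |a| ^ q₀ := Real.rpow_pos_of_pos habs_a _
    have h2 : (0:ℝ) ≤ a ^ 2 * |y| ^ q := by positivity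
    linarith
  -- the ODE rewritten
  have hφ : ∀ w ∈ J, deriv h w = c₂ * (|a| ^ q₀ + a ^ 2 * |h w| ^ q) ^ r := by
    intro w hw
    rw [hODE w hw, hC₁, rootPow_even m (hh0 w hw) hEven2]
  have hH' : deriv h v = c₂ * B ^ r := hφ v hv
  -- derivative of h at v
  have hdiff : HasDerivAt h (deriv h v) v :=
    ((hh.contDiffAt (hJ.mem_nhds hv)).differentiableAt (by simp)).hasDerivAt
  -- derivative of |h ·| ^ q
  have hinner : HasDerivAt (fun w => |h w| ^ q)
      (q * |y| ^ (q - 1) * (s * deriv h v)) v := by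
    have h1 : HasDerivAt (fun w => |h w|) (s * deriv h v) v :=
      (hasDerivAt_abs' hy).comp v hdiff
    have h2 : HasDerivAt (fun t : ℝ => t ^ q) (q * |y| ^ (q - 1)) (|y|) :=
      Real.hasDerivAt_rpow_const (Or.inl (ne_of_gt habs_y))
    exact h2.comp v h1
  -- derivative of the ODE right-hand side
  set D : ℝ := c₂ * (r * B ^ (r - 1) * (a ^ 2 * (q * |y| ^ (q - 1) * (s * deriv h v)))) with hD
  have hrhs : HasDerivAt (fun w => c₂ * (|a| ^ q₀ + a ^ 2 * |h w| ^ q) ^ r) D v := by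
    have h3 : HasDerivAt (fun w => |a| ^ q₀ + a ^ 2 * |h w| ^ q)
        (a ^ 2 * (q * |y| ^ (q - 1) * (s * deriv h v))) v :=
      (hinner.const_mul (a ^ 2)).const_add (|a| ^ q₀)
    have h4 : HasDerivAt (fun t : ℝ => t ^ r) (r * B ^ (r - 1)) B :=
      Real.hasDerivAt_rpow_const (Or.inl (ne_of_gt hBpos))
    refine ((h4.comp v h3).const_mul c₂).congr_deriv ?_
    rw [hD]
  -- second derivative of h
  have hh'' : deriv (deriv h) v = D := by
    have heq : deriv h =ᶠ[nhds v] fun w => c₂ * (|a| ^ q₀ + a ^ 2 * |h w| ^ q) ^ r := by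
      filter_upwards [hJ.mem_nhds hv] with w hw using hφ w hw
    rw [heq.deriv_eq]
    exact hrhs.deriv
  -- rootPow term in the goal
  have hay : a * y ≠ 0 := mul_ne_zero ha hy
  have hterm : rootPow m (deriv g u * h v) (2 * m - 2) = |a| ^ q₀ * |y| ^ q₀ := by
    rw [hg']
    show rootPow m (a * y) _ = _
    rw [rootPow_even m hay hEven1, abs_mul, Real.mul_rpow (abs_nonneg a) (abs_nonneg y)]
  -- key algebraic facts
  have habs1 : |y| ^ q₀ * |y| ^ (q - 1) = |y| := by
    rw [← Real.rpow_add habs_y, hq₀q1, Real.rpow_one]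
  have habs2 : |y| ^ q₀ * |y| ^ q = y ^ 2 := by
    rw [← Real.rpow_add habs_y, hq₀q, show (2:ℝ) = ((2:ℕ):ℝ) by norm_num, Real.rpow_natCast, sq_abs]
  have hB1 : B * B ^ (r - 1) = B ^ r := by
    nth_rewrite 1 [← Real.rpow_one B]
    rw [← Real.rpow_add hBpos]; congr 1; ring
  have hsy : s * |y| = y := real_sign_mul_abs y
  -- the key identity
  have key : (|a| ^ q₀ * |y| ^ q₀ + (a * y) ^ 2) * D = 2 * y * a ^ 2 * (deriv h v) ^ 2 := by
    rw [hD, hH']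
    have expand : |a| ^ q₀ * |y| ^ q₀ + (a * y) ^ 2 = |y| ^ q₀ * B := by
      rw [hB, mul_pow a y, ← habs2]; ring
    rw [expand]
    calc |y| ^ q₀ * B * (c₂ * (r * B ^ (r - 1) *
            (a ^ 2 * (q * |y| ^ (q - 1) * (s * (c₂ * B ^ r))))))
        = (r * q) * a ^ 2 * c₂ ^ 2 * (s * (|y| ^ q₀ * |y| ^ (q - 1)))
            * (B * B ^ (r - 1)) * B ^ r := by ring
      _ = 2 * a ^ 2 * c₂ ^ 2 * y * B ^ r * B ^ r := by
          rw [hrq, habs1, hsy, hB1]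
      _ = 2 * y * a ^ 2 * (c₂ * B ^ r) ^ 2 := by ring
  -- finish
  rw [hg'', hterm, hh'']
  have hga : deriv g u = a := by rw [hg']
  rw [hga]
  have : (a * y) ^ 2 = (a * h v) ^ 2 := rfl
  linear_combination (g u) * key
end

section
/- Let m ≥ 2 be an integer. There do NOT exist smooth functions g : I → ℝ and h : J → ℝ on nonempty open intervals such that g, g', g'', h, h', h'' are all nowhere zero and such that for all (u,v) ∈ I × J the homothetical minimal-surface equation ((g(u)h'(v))^{(2m−2)/(2m−1)} + (g(u)h'(v))²)·g''(u)h(v) − 2g(u)h(v)g'(u)²h'(v)² + ((g'(u)h(v))^{(2m−2)/(2m−1)} + (g'(u)h(v))²)·g(u)h''(v) = 0 holds. -/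
lemma rootPow_eq_abs_rpow {m : ℕ} (hm : 2 ≤ m) (x : ℝ) :
    rootPow m x (2 * m - 2) = |x| ^ ((2 * (m:ℝ) - 2) / (2 * (m:ℝ) - 1)) := by
  have hm' : (2:ℝ) ≤ (m:ℝ) := by exact_mod_cast hm
  have hden : 2 * (m:ℝ) - 1 ≠ 0 := by nlinarith
  have hk : ((2 * m - 2 : ℕ) : ℝ) = 2 * (m:ℝ) - 2 := by
    have : 2 ≤ 2 * m := by omega
    push_cast [Nat.cast_sub this]
    ring
  rcases eq_or_ne x 0 with rfl | hx
  · simp only [rootPow, Real.sign_zero, zero_mul, abs_zero]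
    rw [Real.zero_rpow (div_ne_zero (by nlinarith) hden)]
    exact zero_pow (by omega)
  · have hax : 0 < |x| := abs_pos.2 hx
    have hsign : (Real.sign x) ^ (2 * m - 2) = 1 := by
      have he : Even (2 * m - 2) := ⟨m - 1, by omega⟩
      rcases Real.sign_apply_eq_of_ne_zero x hx with hs | hs
      · rw [hs]; exact he.neg_one_pow
      · rw [hs, one_pow]
    rw [rootPow, mul_pow, hsign, one_mul, ← Real.rpow_natCast (|x| ^ _) (2*m-2),
      ← Real.rpow_mul (abs_nonneg x), hk]
    congr 1
    field_simp

lemma abs_rpow_eq_sq_rpow {x c : ℝ} (hc : c ≠ 0) : |x| ^ c = (x ^ 2) ^ (c / 2) := by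
  rcases eq_or_ne x 0 with rfl | hx
  · rw [abs_zero, Real.zero_rpow hc, zero_pow (two_ne_zero),
      Real.zero_rpow (div_ne_zero hc two_ne_zero)]
  · have h2 : x ^ 2 = |x| ^ (2:ℝ) := by
      rw [show ((2:ℝ)) = ((2:ℕ):ℝ) by norm_num, Real.rpow_natCast, sq_abs]
    rw [h2, ← Real.rpow_mul (abs_nonneg x)]
    congr 1
    field_simp

lemma sq_rpow_inj {x y c : ℝ} (hc : c ≠ 0) (hxy : (x^2)^c = (y^2)^c) : x^2 = y^2 :=
  Real.rpow_left_injOn hc (by simp [Set.mem_setOf_eq, sq_nonneg])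
    (by simp [Set.mem_setOf_eq, sq_nonneg]) hxy

lemma rpow_add_self {t : ℝ} (ht : 0 < t) {p c : ℝ} (h : p + 1 = c) : t ^ p * t = t ^ c := by
  calc t ^ p * t = t ^ p * t ^ (1:ℝ) := by rw [Real.rpow_one]
  _ = t ^ (p+1) := (Real.rpow_add ht p 1).symm
  _ = t ^ c := by rw [h]

lemma rpow_add_eq_one {t : ℝ} (ht : 0 < t) {p q : ℝ} (h : p + q = 0) : t ^ p * t ^ q = 1 := by
  rw [← Real.rpow_add ht, h, Real.rpow_zero]

lemma rpow_add_eq_self {t : ℝ} (ht : 0 < t) {p q : ℝ} (h : p + q = 1) : t ^ p * t ^ q = t := by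
  rw [← Real.rpow_add ht, h, Real.rpow_one]

/-- If `f^2` is constant on an open set containing `u₀` but `f u₀ ≠ 0` and
`deriv f u₀ ≠ 0`, contradiction. -/
lemma sq_const_contra {f : ℝ → ℝ} {I : Set ℝ} (hI : IsOpen I) {u₀ : ℝ} (hu₀ : u₀ ∈ I)
    (hf : ∀ u ∈ I, HasDerivAt f (deriv f u) u)
    (h0 : f u₀ ≠ 0) (h1 : deriv f u₀ ≠ 0)
    (hconst : ∀ u ∈ I, f u ^ 2 = f u₀ ^ 2) : False := by
  have hev : (fun u => f u ^ 2) =ᶠ[nhds u₀] fun _ => f u₀ ^ 2 := by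
    filter_upwards [hI.mem_nhds hu₀] with u hu
    exact hconst u hu
  have hd := (hf u₀ hu₀).pow 2
  have h2 := hev.deriv_eq
  rw [show (fun u => f u ^ 2) = f ^ 2 from rfl, hd.deriv] at h2
  simp only [deriv_const] at h2
  norm_num at h2
  rcases h2 with h2 | h2
  · exact h0 h2
  · exact h1 h2
theorem no_homothetical_minimal_surface_with_nonlinear_factors
    (m : ℕ) (hm : 2 ≤ m) :
    ¬ ∃ (I J : Set ℝ) (g h : ℝ → ℝ),
        IsOpen I ∧ IsOpen J ∧ IsPreconnected I ∧ IsPreconnected J ∧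
        I.Nonempty ∧ J.Nonempty ∧
        ContDiffOn ℝ (⊤ : ℕ∞) g I ∧ ContDiffOn ℝ (⊤ : ℕ∞) h J ∧
        (∀ u ∈ I, g u ≠ 0) ∧ (∀ u ∈ I, deriv g u ≠ 0) ∧
        (∀ u ∈ I, deriv (deriv g) u ≠ 0) ∧
        (∀ v ∈ J, h v ≠ 0) ∧ (∀ v ∈ J, deriv h v ≠ 0) ∧
        (∀ v ∈ J, deriv (deriv h) v ≠ 0) ∧
        (∀ u ∈ I, ∀ v ∈ J,
          (rootPow m (g u * deriv h v) (2 * m - 2) + (g u * deriv h v) ^ 2)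
              * deriv (deriv g) u * h v
            - 2 * g u * h v * (deriv g u) ^ 2 * (deriv h v) ^ 2
            + (rootPow m (deriv g u * h v) (2 * m - 2) + (deriv g u * h v) ^ 2)
              * g u * deriv (deriv h) v = 0) := by
  rintro ⟨I, J, g, h, hIo, hJo, hIc, hJc, ⟨u₀, hu₀⟩, ⟨v₀, hv₀⟩, hg, hh,
    hg0, hg1, hg2, hh0, hh1, hh2, hEq⟩
  obtain ⟨α, hα⟩ : ∃ α : ℝ, α = (2 * (m:ℝ) - 2) / (2 * (m:ℝ) - 1) := ⟨_, rfl⟩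
  have hm' : (2:ℝ) ≤ (m:ℝ) := by exact_mod_cast hm
  have hα0 : 0 < α := by rw [hα]; apply div_pos <;> nlinarith
  have hα1 : α < 1 := by rw [hα, div_lt_one (by nlinarith)]; nlinarith
  -- derivative providers
  have hgD : ∀ u ∈ I, HasDerivAt g (deriv g u) u := fun u hu =>
    ((hg.differentiableOn (by simp)).differentiableAt (hIo.mem_nhds hu)).hasDerivAt
  have hgC : ContDiffOn ℝ (⊤ : ℕ∞) (deriv g) I := hg.deriv_of_isOpen hIo (by simp)
  have hgD2 : ∀ u ∈ I, HasDerivAt (deriv g) (deriv (deriv g) u) u := fun u hu =>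
    ((hgC.differentiableOn (by simp)).differentiableAt (hIo.mem_nhds hu)).hasDerivAt
  have hhD : ∀ v ∈ J, HasDerivAt h (deriv h v) v := fun v hv =>
    ((hh.differentiableOn (by simp)).differentiableAt (hJo.mem_nhds hv)).hasDerivAt
  have hhC : ContDiffOn ℝ (⊤ : ℕ∞) (deriv h) J := hh.deriv_of_isOpen hJo (by simp)
  have hhD2 : ∀ v ∈ J, HasDerivAt (deriv h) (deriv (deriv h) v) v := fun v hv =>
    ((hhC.differentiableOn (by simp)).differentiableAt (hJo.mem_nhds hv)).hasDerivAt
  -- main equation, squares-rpow form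
  have hE : ∀ u ∈ I, ∀ v ∈ J,
      ((g u ^ 2) ^ (α/2) * (deriv h v ^ 2) ^ (α/2) + (g u * deriv h v) ^ 2)
          * deriv (deriv g) u * h v
        - 2 * g u * h v * deriv g u ^ 2 * deriv h v ^ 2
        + ((deriv g u ^ 2) ^ (α/2) * (h v ^ 2) ^ (α/2) + (deriv g u * h v) ^ 2) * g u
            * deriv (deriv h) v = 0 := by
    intro u hu v hv
    have h1 := hEq u hu v hv
    rw [rootPow_eq_abs_rpow hm, rootPow_eq_abs_rpow hm, ← hα,
      abs_rpow_eq_sq_rpow (ne_of_gt hα0), abs_rpow_eq_sq_rpow (ne_of_gt hα0),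
      mul_pow, mul_pow,
      Real.mul_rpow (sq_nonneg _) (sq_nonneg _),
      Real.mul_rpow (sq_nonneg _) (sq_nonneg _)] at h1
    linear_combination h1
  -- nonconstancy of g'^2 and h'^2
  have hgne : ∃ u₁ ∈ I, ∃ u₂ ∈ I, deriv g u₁ ^ 2 ≠ deriv g u₂ ^ 2 := by
    by_contra hcon
    push_neg at hcon
    exact sq_const_contra hIo hu₀ hgD2 (hg1 u₀ hu₀) (hg2 u₀ hu₀)
      fun u hu => hcon u hu u₀ hu₀
  have hhne : ∃ v₁ ∈ J, ∃ v₂ ∈ J, deriv h v₁ ^ 2 ≠ deriv h v₂ ^ 2 := by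
    by_contra hcon
    push_neg at hcon
    exact sq_const_contra hJo hv₀ hhD2 (hh1 v₀ hv₀) (hh2 v₀ hv₀)
      fun v hv => hcon v hv v₀ hv₀
  obtain ⟨u₁, hu₁, u₂, hu₂, hgne⟩ := hgne
  obtain ⟨v₁, hv₁, v₂, hv₂, hhne⟩ := hhne
  have hposg1 : ∀ u ∈ I, (0:ℝ) < deriv g u ^ 2 := fun u hu => by
    have := hg1 u hu; positivity
  have hposg0 : ∀ u ∈ I, (0:ℝ) < g u ^ 2 := fun u hu => by
    have := hg0 u hu; positivity
  have hposh1 : ∀ v ∈ J, (0:ℝ) < deriv h v ^ 2 := fun v hv => by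
    have := hh1 v hv; positivity
  have hposh0 : ∀ v ∈ J, (0:ℝ) < h v ^ 2 := fun v hv => by
    have := hh0 v hv; positivity
  -- Step B : relation for h
  obtain ⟨a, b, hR1⟩ : ∃ a b : ℝ, ∀ v ∈ J,
      a * (deriv h v ^ 2) ^ (α/2) + b * deriv h v ^ 2 + h v * deriv (deriv h) v = 0 := by
    have hq₁ : (deriv g u₁ ^ 2) ^ (α/2) * (deriv g u₁ ^ 2) ^ ((2-α)/2) = deriv g u₁ ^ 2 :=
      rpow_add_eq_self (hposg1 u₁ hu₁) (by ring)
    have hq₂ : (deriv g u₂ ^ 2) ^ (α/2) * (deriv g u₂ ^ 2) ^ ((2-α)/2) = deriv g u₂ ^ 2 :=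
      rpow_add_eq_self (hposg1 u₂ hu₂) (by ring)
    have hγne : (deriv g u₁ ^ 2) ^ ((2-α)/2) ≠ (deriv g u₂ ^ 2) ^ ((2-α)/2) :=
      fun e => hgne (sq_rpow_inj (ne_of_gt (by linarith : (0:ℝ) < (2-α)/2)) e)
    set c5 : ℝ := g u₁ * g u₂ * (deriv g u₁ ^ 2) ^ (α/2) * (deriv g u₂ ^ 2) ^ (α/2) *
      ((deriv g u₁ ^ 2) ^ ((2-α)/2) - (deriv g u₂ ^ 2) ^ ((2-α)/2)) with hc5def
    have hc5 : c5 ≠ 0 := by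
      apply mul_ne_zero (mul_ne_zero (mul_ne_zero (mul_ne_zero (hg0 u₁ hu₁) (hg0 u₂ hu₂))
        (ne_of_gt (Real.rpow_pos_of_pos (hposg1 u₁ hu₁) _)))
        (ne_of_gt (Real.rpow_pos_of_pos (hposg1 u₂ hu₂) _))) (sub_ne_zero.2 hγne)
    set c1 : ℝ := (deriv g u₂ ^ 2) ^ (α/2) * g u₂ * ((g u₁ ^ 2) ^ (α/2) * deriv (deriv g) u₁)
      - (deriv g u₁ ^ 2) ^ (α/2) * g u₁ * ((g u₂ ^ 2) ^ (α/2) * deriv (deriv g) u₂) with hc1def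
    set c2 : ℝ := (deriv g u₂ ^ 2) ^ (α/2) * g u₂ *
        (g u₁ ^ 2 * deriv (deriv g) u₁ - 2 * g u₁ * deriv g u₁ ^ 2)
      - (deriv g u₁ ^ 2) ^ (α/2) * g u₁ *
        (g u₂ ^ 2 * deriv (deriv g) u₂ - 2 * g u₂ * deriv g u₂ ^ 2) with hc2def
    refine ⟨c1 / c5, c2 / c5, fun v hv => ?_⟩
    have hB5 : c1 * ((deriv h v ^ 2) ^ (α/2) * h v) + c2 * (h v * deriv h v ^ 2)
        + c5 * (h v ^ 2 * deriv (deriv h) v) = 0 := by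
      linear_combination
        ((deriv g u₂ ^ 2) ^ (α/2) * g u₂) * (hE u₁ hu₁ v hv)
        - ((deriv g u₁ ^ 2) ^ (α/2) * g u₁) * (hE u₂ hu₂ v hv)
        + (g u₁ * g u₂ * (deriv g u₂ ^ 2) ^ (α/2) * (h v ^ 2 * deriv (deriv h) v)) * hq₁
        - (g u₁ * g u₂ * (deriv g u₁ ^ 2) ^ (α/2) * (h v ^ 2 * deriv (deriv h) v)) * hq₂
    have expand : (c5 * h v) * (c1 / c5 * (deriv h v ^ 2) ^ (α/2) + c2 / c5 * deriv h v ^ 2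
        + h v * deriv (deriv h) v) = c1 * ((deriv h v ^ 2) ^ (α/2) * h v)
        + c2 * (h v * deriv h v ^ 2) + c5 * (h v ^ 2 * deriv (deriv h) v) := by
      field_simp
    exact mul_left_cancel₀ (mul_ne_zero hc5 (hh0 v hv)) ((expand.trans hB5).trans (mul_zero _).symm)
  -- Step C : relation for g
  obtain ⟨s, r, hR2⟩ : ∃ s r : ℝ, ∀ u ∈ I,
      g u * deriv (deriv g) u - 2 * deriv g u ^ 2 + s * (deriv g u ^ 2) ^ (α/2)
        + r * deriv g u ^ 2 = 0 := by
    have hd₁ : (deriv h v₁ ^ 2) ^ (α/2) * (deriv h v₁ ^ 2) ^ ((2-α)/2) = deriv h v₁ ^ 2 :=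
      rpow_add_eq_self (hposh1 v₁ hv₁) (by ring)
    have hd₂ : (deriv h v₂ ^ 2) ^ (α/2) * (deriv h v₂ ^ 2) ^ ((2-α)/2) = deriv h v₂ ^ 2 :=
      rpow_add_eq_self (hposh1 v₂ hv₂) (by ring)
    have hδne : (deriv h v₁ ^ 2) ^ ((2-α)/2) ≠ (deriv h v₂ ^ 2) ^ ((2-α)/2) :=
      fun e => hhne (sq_rpow_inj (ne_of_gt (by linarith : (0:ℝ) < (2-α)/2)) e)
    set cc : ℝ := h v₁ * h v₂ * (deriv h v₁ ^ 2) ^ (α/2) * (deriv h v₂ ^ 2) ^ (α/2) *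
      ((deriv h v₁ ^ 2) ^ ((2-α)/2) - (deriv h v₂ ^ 2) ^ ((2-α)/2)) with hccdef
    have hcc : cc ≠ 0 := by
      apply mul_ne_zero (mul_ne_zero (mul_ne_zero (mul_ne_zero (hh0 v₁ hv₁) (hh0 v₂ hv₂))
        (ne_of_gt (Real.rpow_pos_of_pos (hposh1 v₁ hv₁) _)))
        (ne_of_gt (Real.rpow_pos_of_pos (hposh1 v₂ hv₂) _))) (sub_ne_zero.2 hδne)
    set c4 : ℝ := (deriv h v₂ ^ 2) ^ (α/2) * h v₂ * ((h v₁ ^ 2) ^ (α/2) * deriv (deriv h) v₁)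
      - (deriv h v₁ ^ 2) ^ (α/2) * h v₁ * ((h v₂ ^ 2) ^ (α/2) * deriv (deriv h) v₂) with hc4def
    set c5b : ℝ := (deriv h v₂ ^ 2) ^ (α/2) * h v₂ * (h v₁ ^ 2 * deriv (deriv h) v₁)
      - (deriv h v₁ ^ 2) ^ (α/2) * h v₁ * (h v₂ ^ 2 * deriv (deriv h) v₂) with hc5bdef
    refine ⟨c4 / cc, c5b / cc, fun u hu => ?_⟩
    have hT2 : cc * (g u ^ 2 * deriv (deriv g) u - 2 * g u * deriv g u ^ 2)
        + c4 * ((deriv g u ^ 2) ^ (α/2) * g u) + c5b * (g u * deriv g u ^ 2) = 0 := by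
      linear_combination
        ((deriv h v₂ ^ 2) ^ (α/2) * h v₂) * (hE u hu v₁ hv₁)
        - ((deriv h v₁ ^ 2) ^ (α/2) * h v₁) * (hE u hu v₂ hv₂)
        + (deriv (deriv g) u * g u ^ 2 * h v₁ * h v₂ * (deriv h v₂ ^ 2) ^ (α/2)
            - 2 * deriv g u ^ 2 * g u * h v₁ * h v₂ * (deriv h v₂ ^ 2) ^ (α/2)) * hd₁
        + (- deriv (deriv g) u * g u ^ 2 * h v₁ * h v₂ * (deriv h v₁ ^ 2) ^ (α/2)
            + 2 * deriv g u ^ 2 * g u * h v₁ * h v₂ * (deriv h v₁ ^ 2) ^ (α/2)) * hd₂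
    have expand : (cc * g u) * (g u * deriv (deriv g) u - 2 * deriv g u ^ 2
        + c4 / cc * (deriv g u ^ 2) ^ (α/2) + c5b / cc * deriv g u ^ 2)
        = cc * (g u ^ 2 * deriv (deriv g) u - 2 * g u * deriv g u ^ 2)
        + c4 * ((deriv g u ^ 2) ^ (α/2) * g u) + c5b * (g u * deriv g u ^ 2) := by
      field_simp
    exact mul_left_cancel₀ (mul_ne_zero hcc (hg0 u hu)) ((expand.trans hT2).trans (mul_zero _).symm)
  -- Step D : separated equation
  have hD : ∀ u ∈ I, ∀ v ∈ J,
      (2 - r) * (deriv g u ^ 2) ^ ((2-α)/2) * (g u ^ 2) ^ ((α-2)/2)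
        - a * (deriv g u ^ 2) ^ ((2-α)/2) - s * (g u ^ 2) ^ ((α-2)/2)
        - (r + b) * (deriv g u ^ 2) ^ ((2-α)/2) * (deriv h v ^ 2) ^ ((2-α)/2)
        - s * (deriv h v ^ 2) ^ ((2-α)/2)
        - b * (h v ^ 2) ^ ((α-2)/2) * (deriv h v ^ 2) ^ ((2-α)/2)
        - a * (h v ^ 2) ^ ((α-2)/2) = 0 := by
    intro u hu v hv
    have e1 : (g u ^ 2) ^ ((α-2)/2) * g u ^ 2 = (g u ^ 2) ^ (α/2) :=
      rpow_add_self (hposg0 u hu) (by ring)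
    have e2 : (h v ^ 2) ^ ((α-2)/2) * h v ^ 2 = (h v ^ 2) ^ (α/2) :=
      rpow_add_self (hposh0 v hv) (by ring)
    have e3 : (deriv h v ^ 2) ^ (α/2) * (deriv h v ^ 2) ^ ((2-α)/2) = deriv h v ^ 2 :=
      rpow_add_eq_self (hposh1 v hv) (by ring)
    have e4 : (deriv g u ^ 2) ^ (α/2) * (deriv g u ^ 2) ^ ((2-α)/2) = deriv g u ^ 2 :=
      rpow_add_eq_self (hposg1 u hu) (by ring)
    have hmul : (g u * h v * (deriv g u ^ 2) ^ (α/2) * (deriv h v ^ 2) ^ (α/2)) *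
        ((2 - r) * (deriv g u ^ 2) ^ ((2-α)/2) * (g u ^ 2) ^ ((α-2)/2)
        - a * (deriv g u ^ 2) ^ ((2-α)/2) - s * (g u ^ 2) ^ ((α-2)/2)
        - (r + b) * (deriv g u ^ 2) ^ ((2-α)/2) * (deriv h v ^ 2) ^ ((2-α)/2)
        - s * (deriv h v ^ 2) ^ ((2-α)/2)
        - b * (h v ^ 2) ^ ((α-2)/2) * (deriv h v ^ 2) ^ ((2-α)/2)
        - a * (h v ^ 2) ^ ((α-2)/2)) = 0 := by
      linear_combination (hE u hu v hv)
        + ((deriv h v ^ 2) ^ (α/2) * deriv (deriv g) u * h v) * e1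
        + ((deriv g u ^ 2) ^ (α/2) * g u * deriv (deriv h) v) * e2
        + ((g u ^ 2 * deriv (deriv g) u * h v - 2 * g u * h v * deriv g u ^ 2)
            - (deriv g u ^ 2) ^ (α/2) * g u * h v
              * ((h v ^ 2) ^ ((α-2)/2) + (deriv g u ^ 2) ^ ((2-α)/2)) * b) * e3
        + ((- 2 * g u * h v * (deriv h v ^ 2) ^ (α/2) * (deriv h v ^ 2) ^ ((2-α)/2)
              + h v ^ 2 * g u * deriv (deriv h) v)
            + g u * h v * (deriv h v ^ 2) ^ (α/2)
              * ((g u ^ 2) ^ ((α-2)/2) + (deriv h v ^ 2) ^ ((2-α)/2)) * (2 - r)) * e4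
        - (g u * h v * (deriv h v ^ 2) ^ (α/2)
            * ((g u ^ 2) ^ ((α-2)/2) + (deriv h v ^ 2) ^ ((2-α)/2))) * (hR2 u hu)
        - ((deriv g u ^ 2) ^ (α/2) * g u * h v
            * ((h v ^ 2) ^ ((α-2)/2) + (deriv g u ^ 2) ^ ((2-α)/2))) * (hR1 v hv)
    have hfac : g u * h v * (deriv g u ^ 2) ^ (α/2) * (deriv h v ^ 2) ^ (α/2) ≠ 0 :=
      mul_ne_zero (mul_ne_zero (mul_ne_zero (hg0 u hu) (hh0 v hv))
        (ne_of_gt (Real.rpow_pos_of_pos (hposg1 u hu) _)))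
        (ne_of_gt (Real.rpow_pos_of_pos (hposh1 v hv) _))
    exact (mul_eq_zero.mp hmul).resolve_left hfac
  -- Step E : b = -r
  have hγne : (deriv g u₁ ^ 2) ^ ((2-α)/2) ≠ (deriv g u₂ ^ 2) ^ ((2-α)/2) :=
    fun e => hgne (sq_rpow_inj (ne_of_gt (by linarith : (0:ℝ) < (2-α)/2)) e)
  have hδne : (deriv h v₁ ^ 2) ^ ((2-α)/2) ≠ (deriv h v₂ ^ 2) ^ ((2-α)/2) :=
    fun e => hhne (sq_rpow_inj (ne_of_gt (by linarith : (0:ℝ) < (2-α)/2)) e)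
  have hbr : b = -r := by
    have hz : (r + b) * (((deriv g u₁ ^ 2) ^ ((2-α)/2) - (deriv g u₂ ^ 2) ^ ((2-α)/2))
        * ((deriv h v₁ ^ 2) ^ ((2-α)/2) - (deriv h v₂ ^ 2) ^ ((2-α)/2))) = 0 := by
      linear_combination - (hD u₁ hu₁ v₁ hv₁) + (hD u₁ hu₁ v₂ hv₂)
        + (hD u₂ hu₂ v₁ hv₁) - (hD u₂ hu₂ v₂ hv₂)
    have hne := mul_ne_zero (sub_ne_zero.2 hγne) (sub_ne_zero.2 hδne)
    have := (mul_eq_zero.mp hz).resolve_right hne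
    linarith
  -- Step F : the u-side expression is constant
  obtain ⟨c₀, hL⟩ : ∃ c₀ : ℝ, ∀ u ∈ I,
      (2 - r) * ((deriv g u ^ 2) ^ ((2-α)/2) * (g u ^ 2) ^ ((α-2)/2))
        - a * (deriv g u ^ 2) ^ ((2-α)/2) - s * (g u ^ 2) ^ ((α-2)/2) = c₀ := by
    refine ⟨s * (deriv h v₁ ^ 2) ^ ((2-α)/2)
      + b * (h v₁ ^ 2) ^ ((α-2)/2) * (deriv h v₁ ^ 2) ^ ((2-α)/2)
      + a * (h v₁ ^ 2) ^ ((α-2)/2), fun u hu => ?_⟩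
    linear_combination (hD u hu v₁ hv₁)
      + ((deriv g u ^ 2) ^ ((2-α)/2) * (deriv h v₁ ^ 2) ^ ((2-α)/2)) * hbr
  -- Step G : r = 1 and a = 0
  have hkeyG : ∀ u₃ ∈ I, (1 - r) * (g u₃ ^ 2) ^ ((α-2)/2) = a := by
    intro u₃ hu₃
    have hg1u := hg1 u₃ hu₃
    have hg0u := hg0 u₃ hu₃
    have hg2u := hg2 u₃ hu₃
    have hposT := hposg1 u₃ hu₃
    have hposW := hposg0 u₃ hu₃
    have hA := ((hgD2 u₃ hu₃).pow 2).rpow_const (p := (2-α)/2) (Or.inl (pow_ne_zero 2 hg1u))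
    have hG := ((hgD u₃ hu₃).pow 2).rpow_const (p := (α-2)/2) (Or.inl (pow_ne_zero 2 hg0u))
    have hLd := (((hA.mul hG).const_mul (2-r)).sub (hA.const_mul a)).sub (hG.const_mul s)
    have hev : (fun u => (2-r) * ((deriv g u ^ 2) ^ ((2-α)/2) * (g u ^ 2) ^ ((α-2)/2))
        - a * (deriv g u ^ 2) ^ ((2-α)/2) - s * (g u ^ 2) ^ ((α-2)/2))
        =ᶠ[nhds u₃] (fun _ => c₀) := by
      filter_upwards [hIo.mem_nhds hu₃] with u hu
      linear_combination hL u hu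
    have hD0 := ((hasDerivAt_const u₃ c₀).unique (hLd.congr_of_eventuallyEq hev.symm)).symm
    have hN' : g u₃ * deriv (deriv g) u₃
        = (2-r) * deriv g u₃ ^ 2 - s * (deriv g u₃ ^ 2) ^ (α/2) := by
      linear_combination hR2 u₃ hu₃
    have r1 : (deriv g u₃ ^ 2) ^ ((2-α)/2-1) * deriv g u₃ ^ 2 = (deriv g u₃ ^ 2) ^ ((2-α)/2) :=
      rpow_add_self hposT (by ring)
    have r2 : (deriv g u₃ ^ 2) ^ (α/2) * (deriv g u₃ ^ 2) ^ ((2-α)/2-1) = 1 :=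
      rpow_add_eq_one hposT (by ring)
    have r3 : (g u₃ ^ 2) ^ ((α-2)/2-1) * g u₃ ^ 2 = (g u₃ ^ 2) ^ ((α-2)/2) :=
      rpow_add_self hposW (by ring)
    have hkeymul : ((2-α) * deriv g u₃ * (deriv g u₃ ^ 2) ^ ((2-α)/2-1)
        * (g u₃ * deriv (deriv g) u₃)) * ((1 - r) * (g u₃ ^ 2) ^ ((α-2)/2) - a) = 0 := by
      linear_combination (g u₃) * hD0
        + ((g u₃ ^ 2) ^ ((α-2)/2) * (deriv g u₃ ^ 2) ^ ((2-α)/2-1) * deriv g u₃ * (α-2)) * hN'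
        + ((α-2) * (2-r) * (g u₃ ^ 2) ^ ((α-2)/2) * deriv g u₃) * r1
        + (-(α-2) * s * (g u₃ ^ 2) ^ ((α-2)/2) * deriv g u₃) * r2
        + (-(α-2) * (2-r) * (deriv g u₃ ^ 2) ^ ((2-α)/2) * deriv g u₃
            + (α-2) * s * deriv g u₃) * r3
    have hfac : (2-α) * deriv g u₃ * (deriv g u₃ ^ 2) ^ ((2-α)/2-1)
        * (g u₃ * deriv (deriv g) u₃) ≠ 0 :=
      mul_ne_zero (mul_ne_zero (mul_ne_zero (by linarith) hg1u)
        (ne_of_gt (Real.rpow_pos_of_pos hposT _))) (mul_ne_zero hg0u hg2u)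
    have := (mul_eq_zero.mp hkeymul).resolve_left hfac
    linarith
  have hra : r = 1 ∧ a = 0 := by
    by_cases hr1 : r = 1
    · refine ⟨hr1, ?_⟩
      have := hkeyG u₀ hu₀
      rw [hr1] at this
      simpa using this.symm
    · exfalso
      have hne : (1 - r) ≠ 0 := sub_ne_zero.2 (Ne.symm hr1)
      have hGconst : ∀ u ∈ I, g u ^ 2 = g u₀ ^ 2 := fun u hu =>
        sq_rpow_inj (ne_of_lt (by linarith : (α-2)/2 < 0))
          (mul_left_cancel₀ hne (by rw [hkeyG u hu, hkeyG u₀ hu₀]))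
      exact sq_const_contra hIo hu₀ hgD (hg0 u₀ hu₀) (hg1 u₀ hu₀) hGconst
  -- Step H : h h'' = h'^2
  have hH : ∀ v ∈ J, h v * deriv (deriv h) v = deriv h v ^ 2 := by
    intro v hv
    have h1 := hR1 v hv
    rw [hra.2, hbr, hra.1] at h1
    linear_combination h1
  -- Step I : final contradiction
  have hJconv : Convex ℝ J := hJc.convex
  have hφ : ∀ v ∈ J, HasDerivAt (fun y => h y / deriv h y) 0 v := by
    intro v hv
    have hnum : deriv h v * deriv h v - h v * deriv (deriv h) v = 0 := by
      linear_combination - (hH v hv)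
    have hdd := (hhD v hv).div (hhD2 v hv) (hh1 v hv)
    rw [hnum, zero_div] at hdd
    exact hdd
  obtain ⟨κ, hκ0, hκeq⟩ : ∃ κ : ℝ, κ ≠ 0 ∧ ∀ v ∈ J, h v = κ * deriv h v := by
    refine ⟨h v₁ / deriv h v₁, div_ne_zero (hh0 v₁ hv₁) (hh1 v₁ hv₁), fun v hv => ?_⟩
    have hcst : h v / deriv h v = h v₁ / deriv h v₁ := by
      apply hJconv.is_const_of_fderivWithin_eq_zero
        (fun y hy => ((hφ y hy).differentiableAt).differentiableWithinAt) ?_ hv hv₁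
      intro y hy
      have h1 : HasFDerivWithinAt (fun y => h y / deriv h y)
          ((1 : ℝ →L[ℝ] ℝ).smulRight 0) J y :=
        ((hφ y hy).hasDerivWithinAt).hasFDerivWithinAt
      rw [h1.fderivWithin (hJo.uniqueDiffOn y hy)]
      ext
      simp
    rw [div_mul_eq_mul_div, eq_div_iff (hh1 v₁ hv₁)]
    rw [div_eq_div_iff (hh1 v hv) (hh1 v₁ hv₁)] at hcst
    linarith
  have hck : ∀ v ∈ J, (h v ^ 2) ^ ((α-2)/2)
      = (κ^2) ^ ((α-2)/2) * (deriv h v ^ 2) ^ ((α-2)/2) := by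
    intro v hv
    rw [hκeq v hv, mul_pow, Real.mul_rpow (sq_nonneg κ) (sq_nonneg _)]
  have hkey2 : ∀ v ∈ J, (deriv h v ^ 2) ^ ((α-2)/2)
        * ((g u₀ ^ 2) ^ (α/2) * deriv (deriv g) u₀
          + (κ^2) ^ ((α-2)/2) * (deriv g u₀ ^ 2) ^ (α/2) * g u₀)
      + (g u₀ ^ 2 * deriv (deriv g) u₀ - g u₀ * deriv g u₀ ^ 2) = 0 := by
    intro v hv
    have e2' : (h v ^ 2) ^ ((α-2)/2) * h v ^ 2 = (h v ^ 2) ^ (α/2) :=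
      rpow_add_self (hposh0 v hv) (by ring)
    have e5' : (deriv h v ^ 2) ^ ((α-2)/2) * deriv h v ^ 2 = (deriv h v ^ 2) ^ (α/2) :=
      rpow_add_self (hposh1 v hv) (by ring)
    have hmul : (h v ^ 2 * deriv h v ^ 2) * ((deriv h v ^ 2) ^ ((α-2)/2)
        * ((g u₀ ^ 2) ^ (α/2) * deriv (deriv g) u₀
          + (κ^2) ^ ((α-2)/2) * (deriv g u₀ ^ 2) ^ (α/2) * g u₀)
        + (g u₀ ^ 2 * deriv (deriv g) u₀ - g u₀ * deriv g u₀ ^ 2)) = 0 := by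
      linear_combination (h v) * (hE u₀ hu₀ v hv)
        + (- ((deriv g u₀ ^ 2) ^ (α/2) * (h v ^ 2) ^ (α/2) * g u₀)
            - deriv g u₀ ^ 2 * g u₀ * h v ^ 2) * (hH v hv)
        + ((deriv g u₀ ^ 2) ^ (α/2) * g u₀ * deriv h v ^ 2) * e2'
        + ((g u₀ ^ 2) ^ (α/2) * deriv (deriv g) u₀ * h v ^ 2) * e5'
        + (- ((deriv g u₀ ^ 2) ^ (α/2) * g u₀ * deriv h v ^ 2 * h v ^ 2)) * (hck v hv)
    have hfac : h v ^ 2 * deriv h v ^ 2 ≠ 0 :=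
      ne_of_gt (mul_pos (hposh0 v hv) (hposh1 v hv))
    exact (mul_eq_zero.mp hmul).resolve_left hfac
  have hd12 : (deriv h v₁ ^ 2) ^ ((α-2)/2) ≠ (deriv h v₂ ^ 2) ^ ((α-2)/2) :=
    fun e => hhne (sq_rpow_inj (ne_of_lt (by linarith : (α-2)/2 < 0)) e)
  have hPz : (g u₀ ^ 2) ^ (α/2) * deriv (deriv g) u₀
      + (κ^2) ^ ((α-2)/2) * (deriv g u₀ ^ 2) ^ (α/2) * g u₀ = 0 := by
    have hsub : ((deriv h v₁ ^ 2) ^ ((α-2)/2) - (deriv h v₂ ^ 2) ^ ((α-2)/2))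
        * ((g u₀ ^ 2) ^ (α/2) * deriv (deriv g) u₀
          + (κ^2) ^ ((α-2)/2) * (deriv g u₀ ^ 2) ^ (α/2) * g u₀) = 0 := by
      linear_combination (hkey2 v₁ hv₁) - (hkey2 v₂ hv₂)
    exact (mul_eq_zero.mp hsub).resolve_left (sub_ne_zero.2 hd12)
  have hQz : g u₀ ^ 2 * deriv (deriv g) u₀ - g u₀ * deriv g u₀ ^ 2 = 0 := by
    linear_combination (hkey2 v₁ hv₁) - ((deriv h v₁ ^ 2) ^ ((α-2)/2)) * hPz
  have hgg : g u₀ * deriv (deriv g) u₀ = deriv g u₀ ^ 2 :=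
    mul_left_cancel₀ (hg0 u₀ hu₀) (by linear_combination hQz)
  have hfin : (g u₀ ^ 2) ^ (α/2) * deriv g u₀ ^ 2
      + (κ^2) ^ ((α-2)/2) * (deriv g u₀ ^ 2) ^ (α/2) * g u₀ ^ 2 = 0 := by
    linear_combination (g u₀) * hPz + (- (g u₀ ^ 2) ^ (α/2)) * hgg
  have hpos1 : 0 < (g u₀ ^ 2) ^ (α/2) * deriv g u₀ ^ 2 :=
    mul_pos (Real.rpow_pos_of_pos (hposg0 u₀ hu₀) _) (hposg1 u₀ hu₀)
  have hpos2 : 0 < (κ^2) ^ ((α-2)/2) * (deriv g u₀ ^ 2) ^ (α/2) * g u₀ ^ 2 :=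
    mul_pos (mul_pos (Real.rpow_pos_of_pos (by positivity) _)
      (Real.rpow_pos_of_pos (hposg1 u₀ hu₀) _)) (hposg0 u₀ hu₀)
  linarith
end

section
/- Let m ≥ 2 be an integer and let g : I → ℝ and h : J → ℝ be smooth functions on nonempty open intervals such that g, g', g'', h, h', h'' are all nowhere zero and such that for all (u,v) ∈ I × J the homothetical minimal-surface equation ((g(u)h'(v))^{(2m−2)/(2m−1)} + (g(u)h'(v))²)·g''(u)h(v) − 2g(u)h(v)g'(u)²h'(v)² + ((g'(u)h(v))^{(2m−2)/(2m−1)} + (g'(u)h(v))²)·g(u)h''(v) = 0 holds. Then there exist constants a, b, c ∈ ℝ such that g''(u) = g(u)^{1/(2m−1)}·( a·g'(u)^{(2m−2)/(2m−1)} + b·g'(u)² ) for all u ∈ I, and h''(v) = −h(v)^{1/(2m−1)}·( a·h'(v)^{(2m−2)/(2m−1)} + c·h'(v)² ) for all v ∈ J. -/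
lemma real_sign_mul (x y : ℝ) : Real.sign (x * y) = Real.sign x * Real.sign y := by
  rcases lt_trichotomy x 0 with hx | rfl | hx <;> rcases lt_trichotomy y 0 with hy | rfl | hy
  · rw [Real.sign_of_pos (mul_pos_of_neg_of_neg hx hy), Real.sign_of_neg hx,
      Real.sign_of_neg hy]; ring
  · simp
  · rw [Real.sign_of_neg (mul_neg_of_neg_of_pos hx hy), Real.sign_of_neg hx,
      Real.sign_of_pos hy]; ring
  · simp
  · simp
  · simp
  · rw [Real.sign_of_neg (mul_neg_of_pos_of_neg hx hy), Real.sign_of_pos hx,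
      Real.sign_of_neg hy]; ring
  · simp
  · rw [Real.sign_of_pos (mul_pos hx hy), Real.sign_of_pos hx, Real.sign_of_pos hy]; ring

lemma rootPow_mul (m : ℕ) (x y : ℝ) (k : ℕ) :
    rootPow m (x * y) k = rootPow m x k * rootPow m y k := by
  unfold rootPow
  rw [← mul_pow, real_sign_mul, abs_mul, Real.mul_rpow (abs_nonneg x) (abs_nonneg y)]
  ring_nf

lemma rootPow_ne_zero (m : ℕ) {x : ℝ} (hx : x ≠ 0) (k : ℕ) : rootPow m x k ≠ 0 := by
  unfold rootPow
  apply pow_ne_zero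
  apply mul_ne_zero
  · simpa [Real.sign_eq_zero_iff] using hx
  · exact (Real.rpow_pos_of_pos (abs_pos.mpr hx) _).ne'

lemma cast_2m1 {m : ℕ} (hm : 1 ≤ m) : ((2 * m - 1 : ℕ) : ℝ) = 2 * (m : ℝ) - 1 := by
  have : (1:ℕ) ≤ 2 * m := by omega
  push_cast [this]; ring

lemma cast_2m2 {m : ℕ} (hm : 1 ≤ m) : ((2 * m - 2 : ℕ) : ℝ) = 2 * (m : ℝ) - 2 := by
  have : (2:ℕ) ≤ 2 * m := by omega
  push_cast [this]; ring

lemma tm1_pos {m : ℕ} (hm : 1 ≤ m) : (0:ℝ) < 2 * (m : ℝ) - 1 := by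
  have : (1:ℝ) ≤ (m:ℝ) := by exact_mod_cast hm
  linarith

lemma rootPow_self {m : ℕ} (hm : 1 ≤ m) (x : ℝ) : rootPow m x (2 * m - 1) = x := by
  rcases eq_or_ne x 0 with rfl | hx
  · unfold rootPow; rw [Real.sign_zero, zero_mul, zero_pow (by omega)]
  · unfold rootPow
    rw [mul_pow, ← Real.rpow_natCast (|x| ^ _) (2 * m - 1), ← Real.rpow_mul (abs_nonneg x),
      cast_2m1 hm, inv_mul_cancel₀ (tm1_pos hm).ne', Real.rpow_one]
    rcases Real.sign_apply_eq_of_ne_zero x hx with hs | hs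
    · rw [hs, Odd.neg_one_pow ⟨m - 1, by omega⟩]
      rcases hs' : Real.sign x with _
      have hneg : x < 0 := by
        rcases lt_trichotomy x 0 with h | h | h
        · exact h
        · exact absurd h hx
        · rw [Real.sign_of_pos h] at hs; norm_num at hs
      rw [abs_of_neg hneg]; ring
    · have hpos : 0 < x := by
        rcases lt_trichotomy x 0 with h | h | h
        · rw [Real.sign_of_neg h] at hs; norm_num at hs
        · exact absurd h hx
        · exact h
      rw [hs, one_pow, one_mul, abs_of_pos hpos]

lemma rootPow_one_mul {m : ℕ} (hm : 2 ≤ m) (x : ℝ) :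
    rootPow m x 1 * rootPow m x (2 * m - 2) = x := by
  have : rootPow m x 1 * rootPow m x (2 * m - 2) = rootPow m x (2 * m - 1) := by
    unfold rootPow; rw [← pow_add]; congr 1; omega
  rw [this, rootPow_self (by omega)]

lemma rootPow_even_abs {m : ℕ} (hm : 2 ≤ m) {x : ℝ} (hx : x ≠ 0) :
    rootPow m x (2 * m - 2) = |x| ^ ((2 * (m:ℝ) - 2) * (2 * (m:ℝ) - 1)⁻¹) := by
  unfold rootPow
  rw [mul_pow, ← Real.rpow_natCast (|x| ^ _) (2 * m - 2), ← Real.rpow_mul (abs_nonneg x),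
    cast_2m2 (by omega)]
  have hsq : Real.sign x ^ (2 * m - 2) = 1 := by
    rcases Real.sign_apply_eq_of_ne_zero x hx with hs | hs <;> rw [hs]
    · exact Even.neg_one_pow ⟨m - 1, by omega⟩
    · exact one_pow _
  rw [hsq, one_mul, mul_comm ((2 * (m:ℝ) - 1)⁻¹)]

lemma abs_eq_of_ratio {m : ℕ} (hm : 2 ≤ m) {x y : ℝ} (hx : x ≠ 0) (hy : y ≠ 0)
    (hxy : rootPow m x (2 * m - 2) / x ^ 2 = rootPow m y (2 * m - 2) / y ^ 2) :
    |x| = |y| := by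
  set e : ℝ := (2 * (m:ℝ) - 2) * (2 * (m:ℝ) - 1)⁻¹ with he
  have hx2 : x ^ 2 = |x| ^ (2:ℝ) := by
    rw [show ((2:ℝ)) = ((2:ℕ):ℝ) by norm_num, Real.rpow_natCast, sq_abs]
  have hy2 : y ^ 2 = |y| ^ (2:ℝ) := by
    rw [show ((2:ℝ)) = ((2:ℕ):ℝ) by norm_num, Real.rpow_natCast, sq_abs]
  rw [rootPow_even_abs hm hx, rootPow_even_abs hm hy, hx2, hy2,
    ← Real.rpow_sub (abs_pos.mpr hx), ← Real.rpow_sub (abs_pos.mpr hy)] at hxy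
  have he2 : e - 2 ≠ 0 := by
    have h1 : (0:ℝ) < 2 * (m:ℝ) - 1 := tm1_pos (by omega)
    have hi : (0:ℝ) < (2 * (m:ℝ) - 1)⁻¹ := inv_pos.mpr h1
    have hc : (2 * (m:ℝ) - 1) * (2 * (m:ℝ) - 1)⁻¹ = 1 := mul_inv_cancel₀ h1.ne'
    have : e < 2 := by rw [he]; nlinarith
    linarith
  have := congrArg (fun t : ℝ => t ^ (e - 2)⁻¹) hxy
  rw [← he] at this
  simpa [← Real.rpow_mul (abs_nonneg x), ← Real.rpow_mul (abs_nonneg y),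
    mul_inv_cancel₀ he2] using this

/-- `AA m f u = f^{(2m-2)/(2m-1)}(u) f''(u) / (f(u) f'(u)²)`. -/
noncomputable def AA (m : ℕ) (f : ℝ → ℝ) (u : ℝ) : ℝ :=
  rootPow m (f u) (2 * m - 2) * deriv (deriv f) u / (f u * (deriv f u) ^ 2)

/-- `BB f u = f(u) f''(u) / f'(u)²`. -/
noncomputable def BB (f : ℝ → ℝ) (u : ℝ) : ℝ :=
  f u * deriv (deriv f) u / (deriv f u) ^ 2

/-- `YY m f u = f'(u)^{(2m-2)/(2m-1)} / f'(u)²`. -/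
noncomputable def YY (m : ℕ) (f : ℝ → ℝ) (u : ℝ) : ℝ :=
  rootPow m (deriv f u) (2 * m - 2) / (deriv f u) ^ 2

lemma YY_nonconst {m : ℕ} (hm : 2 ≤ m) {J : Set ℝ} (hJ : IsOpen J)
    (hJc : IsPreconnected J) {f : ℝ → ℝ} (hf : ContDiffOn ℝ (⊤ : ℕ∞) f J)
    (hf'0 : ∀ v ∈ J, deriv f v ≠ 0) (hf''0 : ∀ v ∈ J, deriv (deriv f) v ≠ 0)
    {v0 : ℝ} (hv0 : v0 ∈ J) : ∃ v1 ∈ J, YY m f v1 ≠ YY m f v0 := by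
  by_contra hcon
  push_neg at hcon
  have habs : ∀ v ∈ J, |deriv f v| = |deriv f v0| := by
    intro v hv
    exact abs_eq_of_ratio hm (hf'0 v hv) (hf'0 v0 hv0) (hcon v hv)
  have hcont : ContinuousOn (deriv f) J :=
    hf.continuousOn_deriv_of_isOpen hJ (by simp)
  have hconst : ∀ v ∈ J, deriv f v = deriv f v0 := by
    intro v hv
    by_contra hne
    have hneg : deriv f v = -deriv f v0 := by
      rcases abs_eq_abs.mp (habs v hv) with hc | hc
      · exact absurd hc hne
      · exact hc
    have h0 : (0:ℝ) ∈ deriv f '' J := by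
      rcases le_total (deriv f v0) (deriv f v) with hle | hle
      · exact hJc.intermediate_value hv0 hv hcont
          ⟨by nlinarith [hf'0 v0 hv0, hneg], by nlinarith⟩
      · exact hJc.intermediate_value hv hv0 hcont
          ⟨by nlinarith, by nlinarith⟩
    obtain ⟨w, hw, hw0⟩ := h0
    exact hf'0 w hw hw0
  have hev : deriv f =ᶠ[nhds v0] fun _ => deriv f v0 :=
    Filter.eventuallyEq_of_mem (hJ.mem_nhds hv0) hconst
  have : deriv (deriv f) v0 = 0 := by
    rw [hev.deriv_eq, deriv_const]
  exact hf''0 v0 hv0 this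

theorem homothetical_minimal_surface_separation
    (m : ℕ) (hm : 2 ≤ m) (I J : Set ℝ)
    (hI : IsOpen I) (hJ : IsOpen J)
    (hIc : IsPreconnected I) (hJc : IsPreconnected J)
    (hIne : I.Nonempty) (hJne : J.Nonempty)
    (g h : ℝ → ℝ) (hg : ContDiffOn ℝ (⊤ : ℕ∞) g I) (hh : ContDiffOn ℝ (⊤ : ℕ∞) h J)
    (hg0 : ∀ u ∈ I, g u ≠ 0) (hg'0 : ∀ u ∈ I, deriv g u ≠ 0)
    (hg''0 : ∀ u ∈ I, deriv (deriv g) u ≠ 0)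
    (hh0 : ∀ v ∈ J, h v ≠ 0) (hh'0 : ∀ v ∈ J, deriv h v ≠ 0)
    (hh''0 : ∀ v ∈ J, deriv (deriv h) v ≠ 0)
    (hmin : ∀ u ∈ I, ∀ v ∈ J,
      (rootPow m (g u * deriv h v) (2 * m - 2) + (g u * deriv h v) ^ 2)
          * deriv (deriv g) u * h v
        - 2 * g u * h v * (deriv g u) ^ 2 * (deriv h v) ^ 2
        + (rootPow m (deriv g u * h v) (2 * m - 2) + (deriv g u * h v) ^ 2)
          * g u * deriv (deriv h) v = 0) :
    ∃ a b c : ℝ,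
      (∀ u ∈ I, deriv (deriv g) u
        = rootPow m (g u) 1
            * (a * rootPow m (deriv g u) (2 * m - 2) + b * (deriv g u) ^ 2)) ∧
      (∀ v ∈ J, deriv (deriv h) v
        = -(rootPow m (h v) 1
            * (a * rootPow m (deriv h v) (2 * m - 2) + c * (deriv h v) ^ 2))) := by
  obtain ⟨u0, hu0⟩ := hIne
  obtain ⟨v0, hv0⟩ := hJne
  have E : ∀ u ∈ I, ∀ v ∈ J,
      AA m g u * YY m h v + BB g u + AA m h v * YY m g u + BB h v = 2 := by
    intro u hu v hv
    have h1 := hmin u hu v hv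
    rw [rootPow_mul, rootPow_mul] at h1
    have e1 := hg0 u hu
    have e2 := hg'0 u hu
    have e3 := hh0 v hv
    have e4 := hh'0 v hv
    unfold AA BB YY
    field_simp
    linear_combination h1
  obtain ⟨v1, hv1, hXne⟩ := YY_nonconst hm hJ hJc hh hh'0 hh''0 hv0
  obtain ⟨u1, hu1, hYne⟩ := YY_nonconst hm hI hIc hg hg'0 hg''0 hu0
  have hXd : YY m h v1 - YY m h v0 ≠ 0 := sub_ne_zero.mpr hXne
  have hYd : YY m g u0 - YY m g u1 ≠ 0 := sub_ne_zero.mpr (Ne.symm hYne)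
  obtain ⟨a, ha⟩ : ∃ a : ℝ, a = (AA m h v0 - AA m h v1) / (YY m h v1 - YY m h v0) := ⟨_, rfl⟩
  obtain ⟨b, hb⟩ : ∃ b : ℝ, b = (BB h v0 - BB h v1) / (YY m h v1 - YY m h v0) := ⟨_, rfl⟩
  have hAeq : ∀ u ∈ I, AA m g u = a * YY m g u + b := by
    intro u hu
    have e0 := E u hu v0 hv0
    have e1 := E u hu v1 hv1
    have key : AA m g u = ((AA m h v0 - AA m h v1) * YY m g u + (BB h v0 - BB h v1))
        / (YY m h v1 - YY m h v0) := by
      rw [eq_div_iff hXd]; linear_combination e1 - e0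
    rw [key, ha, hb]; ring
  obtain ⟨c, hc⟩ : ∃ c : ℝ, c = (BB g u0 - BB g u1) / (YY m g u0 - YY m g u1) := ⟨_, rfl⟩
  have hCeq : ∀ v ∈ J, AA m h v = -(a * YY m h v) - c := by
    intro v hv
    have e0 := E u0 hu0 v hv
    have e1 := E u1 hu1 v hv
    have key : AA m h v = (-(a * (YY m g u0 - YY m g u1) * YY m h v)
        - (BB g u0 - BB g u1)) / (YY m g u0 - YY m g u1) := by
      rw [eq_div_iff hYd]
      linear_combination e0 - e1 - YY m h v * (hAeq u0 hu0) + YY m h v * (hAeq u1 hu1)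
    rw [key, hc]; field_simp
  refine ⟨a, b, c, ?_, ?_⟩
  · intro u hu
    have hA := hAeq u hu
    unfold AA YY at hA
    have e1 := hg0 u hu
    have e2 := hg'0 u hu
    have hRP := rootPow_one_mul hm (g u)
    have hRPne := rootPow_ne_zero m e1 (2 * m - 2)
    apply mul_left_cancel₀ hRPne
    apply mul_left_cancel₀ (pow_ne_zero 2 e2)
    field_simp at hA
    linear_combination (deriv g u) ^ 2 * hA - (a * rootPow m (deriv g u) (2 * m - 2)
      + b * (deriv g u) ^ 2) * (deriv g u) ^ 2 * hRP
  · intro v hv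
    have hC := hCeq v hv
    unfold AA YY at hC
    have e1 := hh0 v hv
    have e2 := hh'0 v hv
    have hRP := rootPow_one_mul hm (h v)
    have hRPne := rootPow_ne_zero m e1 (2 * m - 2)
    apply mul_left_cancel₀ hRPne
    apply mul_left_cancel₀ (pow_ne_zero 2 e2)
    field_simp at hC
    linear_combination (deriv h v) ^ 2 * hC + (a * rootPow m (deriv h v) (2 * m - 2)
      + c * (deriv h v) ^ 2) * (deriv h v) ^ 2 * hRP
end

section
/- Let X, Y, Z : ℝ → ℝ be smooth functions such that X', Y', Z' are nowhere zero, X(s) + Y(t) ≠ 0, Y(s) + Z(t) ≠ 0, and Z(s) + X(t) ≠ 0 for all s, t ∈ ℝ, and suppose that B(u, v, −u−v) = 0 for all u, v ∈ ℝ, where B(u,v,w) = (Y(v)+Z(w))·X'(u) + (Z(w)+X(u))·Y'(v) + (X(u)+Y(v))·Z'(w). Then there exists a constant a ∈ ℝ such that X'''(u) = a·X'(u), Y'''(v) = a·Y'(v), and Z'''(w) = a·Z'(w) for all u, v, w ∈ ℝ. -/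
open scoped ContDiff

theorem separable_minimal_surface_third_order_ode
    (X Y Z : ℝ → ℝ)
    (hX : ContDiff ℝ (⊤ : ℕ∞) X) (hY : ContDiff ℝ (⊤ : ℕ∞) Y) (hZ : ContDiff ℝ (⊤ : ℕ∞) Z)
    (hX' : ∀ u : ℝ, deriv X u ≠ 0) (hY' : ∀ v : ℝ, deriv Y v ≠ 0)
    (hZ' : ∀ w : ℝ, deriv Z w ≠ 0)
    (hXY : ∀ s t : ℝ, X s + Y t ≠ 0)
    (hYZ : ∀ s t : ℝ, Y s + Z t ≠ 0)
    (hZX : ∀ s t : ℝ, Z s + X t ≠ 0)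
    (hB : ∀ u v : ℝ,
      (Y v + Z (-u - v)) * deriv X u + (Z (-u - v) + X u) * deriv Y v
        + (X u + Y v) * deriv Z (-u - v) = 0) :
    ∃ a : ℝ,
      (∀ u : ℝ, deriv (deriv (deriv X)) u = a * deriv X u) ∧
      (∀ v : ℝ, deriv (deriv (deriv Y)) v = a * deriv Y v) ∧
      (∀ w : ℝ, deriv (deriv (deriv Z)) w = a * deriv Z w) := by
  have cX0 : ContDiff ℝ ∞ X := hX.of_le (by simp)
  have cX1 : ContDiff ℝ ∞ (deriv X) := (contDiff_infty_iff_deriv.mp cX0).2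
  have cX2 : ContDiff ℝ ∞ (deriv (deriv X)) := (contDiff_infty_iff_deriv.mp cX1).2
  have dX0 : ∀ t : ℝ, HasDerivAt (X) (deriv X t) t := fun t => (cX0.differentiable (by norm_num) t).hasDerivAt
  have dX1 : ∀ t : ℝ, HasDerivAt (deriv X) (deriv (deriv X) t) t := fun t => (cX1.differentiable (by norm_num) t).hasDerivAt
  have dX2 : ∀ t : ℝ, HasDerivAt (deriv (deriv X)) (deriv (deriv (deriv X)) t) t := fun t => (cX2.differentiable (by norm_num) t).hasDerivAt
  have cY0 : ContDiff ℝ ∞ Y := hY.of_le (by simp)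
  have cY1 : ContDiff ℝ ∞ (deriv Y) := (contDiff_infty_iff_deriv.mp cY0).2
  have cY2 : ContDiff ℝ ∞ (deriv (deriv Y)) := (contDiff_infty_iff_deriv.mp cY1).2
  have dY0 : ∀ t : ℝ, HasDerivAt (Y) (deriv Y t) t := fun t => (cY0.differentiable (by norm_num) t).hasDerivAt
  have dY1 : ∀ t : ℝ, HasDerivAt (deriv Y) (deriv (deriv Y) t) t := fun t => (cY1.differentiable (by norm_num) t).hasDerivAt
  have dY2 : ∀ t : ℝ, HasDerivAt (deriv (deriv Y)) (deriv (deriv (deriv Y)) t) t := fun t => (cY2.differentiable (by norm_num) t).hasDerivAt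
  have cZ0 : ContDiff ℝ ∞ Z := hZ.of_le (by simp)
  have cZ1 : ContDiff ℝ ∞ (deriv Z) := (contDiff_infty_iff_deriv.mp cZ0).2
  have cZ2 : ContDiff ℝ ∞ (deriv (deriv Z)) := (contDiff_infty_iff_deriv.mp cZ1).2
  have dZ0 : ∀ t : ℝ, HasDerivAt (Z) (deriv Z t) t := fun t => (cZ0.differentiable (by norm_num) t).hasDerivAt
  have dZ1 : ∀ t : ℝ, HasDerivAt (deriv Z) (deriv (deriv Z) t) t := fun t => (cZ1.differentiable (by norm_num) t).hasDerivAt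
  have dZ2 : ∀ t : ℝ, HasDerivAt (deriv (deriv Z)) (deriv (deriv (deriv Z)) t) t := fun t => (cZ2.differentiable (by norm_num) t).hasDerivAt
  have hZu0 : ∀ v t : ℝ, HasDerivAt (fun u : ℝ => Z (-u - v)) (-deriv Z (-t - v)) t := by
    intro v t
    have h1 : HasDerivAt (fun u : ℝ => -u - v) (-1) t := by
      simpa using ((hasDerivAt_id t).neg.sub_const v)
    simpa [Function.comp_def] using (dZ0 (-t - v)).comp t h1
  have hZv0 : ∀ u t : ℝ, HasDerivAt (fun v : ℝ => Z (-u - v)) (-deriv Z (-u - t)) t := by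
    intro u t
    have h1 : HasDerivAt (fun s : ℝ => -u - s) (-1) t := by
      simpa using (HasDerivAt.const_sub (-u) (hasDerivAt_id t))
    simpa [Function.comp_def] using (dZ0 (-u - t)).comp t h1
  have hZu1 : ∀ v t : ℝ, HasDerivAt (fun u : ℝ => deriv Z (-u - v)) (-deriv (deriv Z) (-t - v)) t := by
    intro v t
    have h1 : HasDerivAt (fun u : ℝ => -u - v) (-1) t := by
      simpa using ((hasDerivAt_id t).neg.sub_const v)
    simpa [Function.comp_def] using (dZ1 (-t - v)).comp t h1
  have hZv1 : ∀ u t : ℝ, HasDerivAt (fun v : ℝ => deriv Z (-u - v)) (-deriv (deriv Z) (-u - t)) t := by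
    intro u t
    have h1 : HasDerivAt (fun s : ℝ => -u - s) (-1) t := by
      simpa using (HasDerivAt.const_sub (-u) (hasDerivAt_id t))
    simpa [Function.comp_def] using (dZ1 (-u - t)).comp t h1
  have hZu2 : ∀ v t : ℝ, HasDerivAt (fun u : ℝ => deriv (deriv Z) (-u - v)) (-deriv (deriv (deriv Z)) (-t - v)) t := by
    intro v t
    have h1 : HasDerivAt (fun u : ℝ => -u - v) (-1) t := by
      simpa using ((hasDerivAt_id t).neg.sub_const v)
    simpa [Function.comp_def] using (dZ2 (-t - v)).comp t h1
  have hZv2 : ∀ u t : ℝ, HasDerivAt (fun v : ℝ => deriv (deriv Z) (-u - v)) (-deriv (deriv (deriv Z)) (-u - t)) t := by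
    intro u t
    have h1 : HasDerivAt (fun s : ℝ => -u - s) (-1) t := by
      simpa using (HasDerivAt.const_sub (-u) (hasDerivAt_id t))
    simpa [Function.comp_def] using (dZ2 (-u - t)).comp t h1
  have hE : ∀ u v : ℝ, ((1) : ℝ) * (X u * deriv Y v) + ((1) : ℝ) * (X u * deriv Z (-u - v)) + ((1) : ℝ) * (deriv X u * Y v) + ((1) : ℝ) * (deriv X u * Z (-u - v)) + ((1) : ℝ) * (Y v * deriv Z (-u - v)) + ((1) : ℝ) * (deriv Y v * Z (-u - v)) = 0 := by
    intro u v
    linear_combination hB u v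
  have hEu : ∀ u v : ℝ, ((-1) : ℝ) * (X u * deriv (deriv Z) (-u - v)) + ((1) : ℝ) * (deriv X u * deriv Y v) + ((1) : ℝ) * (deriv (deriv X) u * Y v) + ((1) : ℝ) * (deriv (deriv X) u * Z (-u - v)) + ((-1) : ℝ) * (Y v * deriv (deriv Z) (-u - v)) + ((-1) : ℝ) * (deriv Y v * deriv Z (-u - v)) = 0 := by
    intro u v
    have HD : HasDerivAt (fun u : ℝ => ((1) : ℝ) * (X u * deriv Y v) + ((1) : ℝ) * (X u * deriv Z (-u - v)) + ((1) : ℝ) * (deriv X u * Y v) + ((1) : ℝ) * (deriv X u * Z (-u - v)) + ((1) : ℝ) * (Y v * deriv Z (-u - v)) + ((1) : ℝ) * (deriv Y v * Z (-u - v))) (((1) : ℝ) * (deriv X u * deriv Y v) + ((1) : ℝ) * (deriv X u * deriv Z (-u - v) + X u * (-deriv (deriv Z) (-u - v))) + ((1) : ℝ) * (deriv (deriv X) u * Y v) + ((1) : ℝ) * (deriv (deriv X) u * Z (-u - v) + deriv X u * (-deriv Z (-u - v))) + ((1) : ℝ) * (Y v * (-deriv (deriv Z) (-u - v))) + ((1)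 : ℝ) * (deriv Y v * (-deriv Z (-u - v)))) u :=
      ((((((((dX0 u).mul_const (deriv Y v)).const_mul ((1) : ℝ)).add (((dX0 u).mul (hZu1 v u)).const_mul ((1) : ℝ))).add (((dX1 u).mul_const (Y v)).const_mul ((1) : ℝ))).add (((dX1 u).mul (hZu0 v u)).const_mul ((1) : ℝ))).add (((hZu1 v u).const_mul (Y v)).const_mul ((1) : ℝ))).add (((hZu0 v u).const_mul (deriv Y v)).const_mul ((1) : ℝ)))
    rw [show (fun u : ℝ => ((1) : ℝ) * (X u * deriv Y v) + ((1) : ℝ) * (X u * deriv Z (-u - v)) + ((1) : ℝ) * (deriv X u * Y v) + ((1) : ℝ) * (deriv X u * Z (-u - v)) + ((1) : ℝ) * (Y v * deriv Z (-u - v)) + ((1) : ℝ) * (deriv Y v * Z (-u - v))) = (fun _ => (0 : ℝ)) from funext fun u => hE u v] at HD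
    have h0 := HD.unique (hasDerivAt_const u 0)
    linear_combination h0
  have hEv : ∀ u v : ℝ, ((1) : ℝ) * (X u * deriv (deriv Y) v) + ((-1) : ℝ) * (X u * deriv (deriv Z) (-u - v)) + ((1) : ℝ) * (deriv X u * deriv Y v) + ((-1) : ℝ) * (deriv X u * deriv Z (-u - v)) + ((-1) : ℝ) * (Y v * deriv (deriv Z) (-u - v)) + ((1) : ℝ) * (deriv (deriv Y) v * Z (-u - v)) = 0 := by
    intro u v
    have HD : HasDerivAt (fun v : ℝ => ((1) : ℝ) * (X u * deriv Y v) + ((1) : ℝ) * (X u * deriv Z (-u - v)) + ((1) : ℝ) * (deriv X u * Y v) + ((1) : ℝ) * (deriv X u * Z (-u - v)) + ((1) : ℝ) * (Y v * deriv Z (-u - v)) + ((1) : ℝ) * (deriv Y v * Z (-u - v))) (((1) : ℝ) * (X u * deriv (deriv Y) v) + ((1) : ℝ) * (X u * (-deriv (deriv Z) (-u - v))) + ((1) : ℝ) * (deriv X u * deriv Y v) + ((1) : ℝ) * (deriv X u * (-deriv Z (-u - v))) + ((1) : ℝ) * (deriv Y v * deriv Z (-u - v) + Y v * (-deriv (deriv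 Z) (-u - v))) + ((1) : ℝ) * (deriv (deriv Y) v * Z (-u - v) + deriv Y v * (-deriv Z (-u - v)))) v :=
      ((((((((dY1 v).const_mul (X u)).const_mul ((1) : ℝ)).add (((hZv1 u v).const_mul (X u)).const_mul ((1) : ℝ))).add (((dY0 v).const_mul (deriv X u)).const_mul ((1) : ℝ))).add (((hZv0 u v).const_mul (deriv X u)).const_mul ((1) : ℝ))).add (((dY0 v).mul (hZv1 u v)).const_mul ((1) : ℝ))).add (((dY1 v).mul (hZv0 u v)).const_mul ((1) : ℝ)))
    rw [show (fun v : ℝ => ((1) : ℝ) * (X u * deriv Y v) + ((1) : ℝ) * (X u * deriv Z (-u - v)) + ((1) : ℝ) * (deriv X u * Y v) + ((1) : ℝ) * (deriv X u * Z (-u - v)) + ((1) : ℝ) * (Y v * deriv Z (-u - v)) + ((1) : ℝ) * (deriv Y v * Z (-u - v))) = (fun _ => (0 : ℝ)) from funext fun v => hE u v] at HD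
    have h0 := HD.unique (hasDerivAt_const v 0)
    linear_combination h0
  have hEuu : ∀ u v : ℝ, ((1) : ℝ) * (X u * deriv (deriv (deriv Z)) (-u - v)) + ((-1) : ℝ) * (deriv X u * deriv (deriv Z) (-u - v)) + ((1) : ℝ) * (deriv (deriv X) u * deriv Y v) + ((-1) : ℝ) * (deriv (deriv X) u * deriv Z (-u - v)) + ((1) : ℝ) * (deriv (deriv (deriv X)) u * Y v) + ((1) : ℝ) * (deriv (deriv (deriv X)) u * Z (-u - v)) + ((1) : ℝ) * (Y v * deriv (deriv (deriv Z)) (-u - v)) + ((1) : ℝ) * (deriv Y v * deriv (deriv Z) (-u - v)) = 0 := by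
    intro u v
    have HD : HasDerivAt (fun u : ℝ => ((-1) : ℝ) * (X u * deriv (deriv Z) (-u - v)) + ((1) : ℝ) * (deriv X u * deriv Y v) + ((1) : ℝ) * (deriv (deriv X) u * Y v) + ((1) : ℝ) * (deriv (deriv X) u * Z (-u - v)) + ((-1) : ℝ) * (Y v * deriv (deriv Z) (-u - v)) + ((-1) : ℝ) * (deriv Y v * deriv Z (-u - v))) (((-1) : ℝ) * (deriv X u * deriv (deriv Z) (-u - v) + X u * (-deriv (deriv (deriv Z)) (-u - v))) + ((1) : ℝ) * (deriv (deriv X) u * deriv Y v) + ((1) : ℝ) * (deriv (deriv (deriv X)) u * Y v) + ((1) : ℝ) * (deriv (deriv (deriv X)) u * Z (-u - v) + deriv (deriv X) u * (-deriv Z (-u - v))) + ((-1) : ℝ) * (Y v * (-deriv (deriv (deriv Z)) (-u - v))) + ((-1) : ℝ) * (deriv Y v * (-deriv (deriv Z) (-u - v)))) u :=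
      ((((((((dX0 u).mul (hZu2 v u)).const_mul ((-1) : ℝ)).add (((dX1 u).mul_const (deriv Y v)).const_mul ((1) : ℝ))).add (((dX2 u).mul_const (Y v)).const_mul ((1) : ℝ))).add (((dX2 u).mul (hZu0 v u)).const_mul ((1) : ℝ))).add (((hZu2 v u).const_mul (Y v)).const_mul ((-1) : ℝ))).add (((hZu1 v u).const_mul (deriv Y v)).const_mul ((-1) : ℝ)))
    rw [show (fun u : ℝ => ((-1) : ℝ) * (X u * deriv (deriv Z) (-u - v)) + ((1) : ℝ) * (deriv X u * deriv Y v) + ((1) : ℝ) * (deriv (deriv X) u * Y v) + ((1) : ℝ) * (deriv (deriv X) u * Z (-u - v)) + ((-1) : ℝ) * (Y v * deriv (deriv Z) (-u - v)) + ((-1) : ℝ) * (deriv Y v * deriv Z (-u - v))) = (fun _ => (0 : ℝ)) from funext fun u => hEu u v] at HD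
    have h0 := HD.unique (hasDerivAt_const u 0)
    linear_combination h0
  have hEuv : ∀ u v : ℝ, ((1) : ℝ) * (X u * deriv (deriv (deriv Z)) (-u - v)) + ((1) : ℝ) * (deriv X u * deriv (deriv Y) v) + ((1) : ℝ) * (deriv (deriv X) u * deriv Y v) + ((-1) : ℝ) * (deriv (deriv X) u * deriv Z (-u - v)) + ((1) : ℝ) * (Y v * deriv (deriv (deriv Z)) (-u - v)) + ((-1) : ℝ) * (deriv (deriv Y) v * deriv Z (-u - v)) = 0 := by
    intro u v
    have HD : HasDerivAt (fun v : ℝ => ((-1) : ℝ) * (X u * deriv (deriv Z) (-u - v)) + ((1) : ℝ) * (deriv X u * deriv Y v) + ((1) : ℝ) * (deriv (deriv X) u * Y v) + ((1) : ℝ) * (deriv (deriv X) u * Z (-u - v)) + ((-1) : ℝ) * (Y v * deriv (deriv Z) (-u - v)) + ((-1) : ℝ) * (deriv Y v * deriv Z (-u - v))) (((-1) : ℝ) * (X u * (-deriv (deriv (deriv Z)) (-u - v))) + ((1) : ℝ) * (deriv X u * deriv (deriv Y) v) + ((1) : ℝ) * (deriv (deriv X) u * deriv Y v) + ((1) : ℝ)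 * (deriv (deriv X) u * (-deriv Z (-u - v))) + ((-1) : ℝ) * (deriv Y v * deriv (deriv Z) (-u - v) + Y v * (-deriv (deriv (deriv Z)) (-u - v))) + ((-1) : ℝ) * (deriv (deriv Y) v * deriv Z (-u - v) + deriv Y v * (-deriv (deriv Z) (-u - v)))) v :=
      ((((((((hZv2 u v).const_mul (X u)).const_mul ((-1) : ℝ)).add (((dY1 v).const_mul (deriv X u)).const_mul ((1) : ℝ))).add (((dY0 v).const_mul (deriv (deriv X) u)).const_mul ((1) : ℝ))).add (((hZv0 u v).const_mul (deriv (deriv X) u)).const_mul ((1) : ℝ))).add (((dY0 v).mul (hZv2 u v)).const_mul ((-1) : ℝ))).add (((dY1 v).mul (hZv1 u v)).const_mul ((-1) : ℝ)))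
    rw [show (fun v : ℝ => ((-1) : ℝ) * (X u * deriv (deriv Z) (-u - v)) + ((1) : ℝ) * (deriv X u * deriv Y v) + ((1) : ℝ) * (deriv (deriv X) u * Y v) + ((1) : ℝ) * (deriv (deriv X) u * Z (-u - v)) + ((-1) : ℝ) * (Y v * deriv (deriv Z) (-u - v)) + ((-1) : ℝ) * (deriv Y v * deriv Z (-u - v))) = (fun _ => (0 : ℝ)) from funext fun v => hEu u v] at HD
    have h0 := HD.unique (hasDerivAt_const v 0)
    linear_combination h0
  have hEvv : ∀ u v : ℝ, ((1) : ℝ) * (X u * deriv (deriv (deriv Y)) v) + ((1) : ℝ) * (X u * deriv (deriv (deriv Z)) (-u - v)) + ((1) : ℝ) * (deriv X u * deriv (deriv Y) v) + ((1) : ℝ) * (deriv X u * deriv (deriv Z) (-u - v)) + ((1) : ℝ) * (Y v * deriv (deriv (deriv Z)) (-u - v)) + ((-1) : ℝ) * (deriv Y v * deriv (deriv Z) (-u - v)) + ((-1) : ℝ) * (deriv (deriv Y) v * deriv Z (-u - v)) + ((1) : ℝ) * (deriv (deriv (deriv Y)) v * Z (-u - v)) = 0 := by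
    intro u v
    have HD : HasDerivAt (fun v : ℝ => ((1) : ℝ) * (X u * deriv (deriv Y) v) + ((-1) : ℝ) * (X u * deriv (deriv Z) (-u - v)) + ((1) : ℝ) * (deriv X u * deriv Y v) + ((-1) : ℝ) * (deriv X u * deriv Z (-u - v)) + ((-1) : ℝ) * (Y v * deriv (deriv Z) (-u - v)) + ((1) : ℝ) * (deriv (deriv Y) v * Z (-u - v))) (((1) : ℝ) * (X u * deriv (deriv (deriv Y)) v) + ((-1) : ℝ) * (X u * (-deriv (deriv (deriv Z)) (-u - v))) + ((1) : ℝ) * (deriv X u * deriv (deriv Y) v) + ((-1) : ℝ) * (deriv X u * (-deriv (deriv Z) (-u - v))) + ((-1) : ℝ) * (deriv Y v * deriv (deriv Z) (-u - v) + Y v * (-deriv (deriv (deriv Z)) (-u - v))) + ((1) : ℝ) * (deriv (deriv (deriv Y)) v * Z (-u - v) + deriv (deriv Y) v * (-deriv Z (-u - v)))) v :=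
      ((((((((dY2 v).const_mul (X u)).const_mul ((1) : ℝ)).add (((hZv2 u v).const_mul (X u)).const_mul ((-1) : ℝ))).add (((dY1 v).const_mul (deriv X u)).const_mul ((1) : ℝ))).add (((hZv1 u v).const_mul (deriv X u)).const_mul ((-1) : ℝ))).add (((dY0 v).mul (hZv2 u v)).const_mul ((-1) : ℝ))).add (((dY2 v).mul (hZv0 u v)).const_mul ((1) : ℝ)))
    rw [show (fun v : ℝ => ((1) : ℝ) * (X u * deriv (deriv Y) v) + ((-1) : ℝ) * (X u * deriv (deriv Z) (-u - v)) + ((1) : ℝ) * (deriv X u * deriv Y v) + ((-1) : ℝ) * (deriv X u * deriv Z (-u - v)) + ((-1) : ℝ) * (Y v * deriv (deriv Z) (-u - v)) + ((1) : ℝ) * (deriv (deriv Y) v * Z (-u - v))) = (fun _ => (0 : ℝ)) from funext fun v => hEv u v] at HD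
    have h0 := HD.unique (hasDerivAt_const v 0)
    linear_combination h0
  have key1 : ∀ u v : ℝ,
      (Y v + Z (-u - v)) * ((X u + Z (-u - v)) * (deriv (deriv (deriv X)) u * deriv Y v - deriv X u * deriv (deriv (deriv Y)) v)) = 0 := by
    intro u v
    linear_combination (((-1) : ℝ) * (deriv X u) * (deriv (deriv Y) v) + ((1) : ℝ) * (deriv (deriv (deriv X)) u) * (Y v) + ((1) : ℝ) * (deriv (deriv (deriv X)) u) * (Z (-u - v)) + ((1) : ℝ) * (deriv (deriv Y) v) * (deriv Z (-u - v))) * hE u v + (((1) : ℝ) * (X u) * (deriv (deriv Y) v) + ((-1) : ℝ) * (X u) * (deriv (deriv Z) (-u - v)) + ((-1) : ℝ) * (Y v) * (deriv (deriv Z) (-u - v)) + ((1) : ℝ) * (deriv (deriv Y) v) * (Z (-u - v))) * hEu u v + (((1) : ℝ) * (X u) * (deriv (deriv Z) (-u - v)) + ((-1) : ℝ) * (deriv (deriv X) u) * (Y v) + ((-1) : ℝ) * (deriv (deriv X) u) * (Z (-u - v)) + ((1) : ℝ) * (Y v) * (deriv (deriv Z) (-u - v))) * hEv u v + (((-1)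 : ℝ) * (X u) * (deriv Z (-u - v)) + ((-1) : ℝ) * (deriv X u) * (Y v) + ((-1) : ℝ) * (deriv X u) * (Z (-u - v)) + ((-1) : ℝ) * (Y v) * (deriv Z (-u - v))) * hEuu u v + (((1) : ℝ) * (X u) * (deriv Z (-u - v)) + ((2) : ℝ) * (deriv X u) * (Y v) + ((2) : ℝ) * (deriv X u) * (Z (-u - v)) + ((1) : ℝ) * (Y v) * (deriv Z (-u - v))) * hEuv u v + (((-1) : ℝ) * (deriv X u) * (Y v) + ((-1) : ℝ) * (deriv X u) * (Z (-u - v))) * hEvv u v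
  have key2 : ∀ u v : ℝ,
      (X u + Z (-u - v)) * ((X u + Y v) * (deriv (deriv (deriv Y)) v * deriv Z (-u - v) - deriv Y v * deriv (deriv (deriv Z)) (-u - v))) = 0 := by
    intro u v
    linear_combination (((-1) : ℝ) * (X u) * (deriv (deriv (deriv Z)) (-u - v)) + ((-1) : ℝ) * (deriv X u) * (deriv (deriv Y) v) + ((-1) : ℝ) * (Y v) * (deriv (deriv (deriv Z)) (-u - v)) + ((1) : ℝ) * (deriv (deriv Y) v) * (deriv Z (-u - v))) * hE u v + (((1) : ℝ) * (X u) * (deriv (deriv Y) v) + ((-1) : ℝ) * (X u) * (deriv (deriv Z) (-u - v)) + ((-1) : ℝ) * (Y v) * (deriv (deriv Z) (-u - v)) + ((1) : ℝ) * (deriv (deriv Y) v) * (Z (-u - v))) * hEu u v + (((1) : ℝ) * (X u) * (deriv (deriv Z) (-u - v)) + ((-1) : ℝ) * (deriv (deriv X) u) * (Y v) + ((-1) : ℝ) * (deriv (deriv X) u) * (Z (-u - v)) + ((1) : ℝ) * (Y v) * (deriv (deriv Z) (-u - v))) * hEv u v + (((1) : ℝ) * (deriv X u) * (Y v) + ((1)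 : ℝ) * (deriv X u) * (Z (-u - v))) * hEuv u v + (((1) : ℝ) * (X u) * (deriv Z (-u - v)) + ((1) : ℝ) * (Y v) * (deriv Z (-u - v))) * hEvv u v
  have ident1 : ∀ u v : ℝ, deriv (deriv (deriv X)) u * deriv Y v = deriv X u * deriv (deriv (deriv Y)) v := by
    intro u v
    have h := key1 u v
    have h1 : Y v + Z (-u - v) ≠ 0 := hYZ v (-u - v)
    have h2 : X u + Z (-u - v) ≠ 0 := fun hc => hZX (-u - v) u (by linarith)
    have h3 := (mul_eq_zero.mp h).resolve_left h1
    have h4 := (mul_eq_zero.mp h3).resolve_left h2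
    linarith
  have ident2 : ∀ u v : ℝ, deriv (deriv (deriv Y)) v * deriv Z (-u - v) = deriv Y v * deriv (deriv (deriv Z)) (-u - v) := by
    intro u v
    have h := key2 u v
    have h2 : X u + Z (-u - v) ≠ 0 := fun hc => hZX (-u - v) u (by linarith)
    have h3 := (mul_eq_zero.mp h).resolve_left h2
    have h4 := (mul_eq_zero.mp h3).resolve_left (hXY u v)
    linarith
  refine ⟨deriv (deriv (deriv X)) 0 / deriv X 0, ?_, ?_, ?_⟩
  · intro u
    rw [div_mul_eq_mul_div, eq_div_iff (hX' 0)]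
    have e1 := ident1 u 0
    have e2 := ident1 0 0
    have h5 : (deriv (deriv (deriv X)) u * deriv X 0 - deriv (deriv (deriv X)) 0 * deriv X u) * deriv Y 0 = 0 := by
      linear_combination deriv X 0 * e1 - deriv X u * e2
    have h6 := (mul_eq_zero.mp h5).resolve_right (hY' 0)
    linarith
  · intro v
    rw [div_mul_eq_mul_div, eq_div_iff (hX' 0)]
    linear_combination - ident1 0 v
  · intro w
    have e3 := ident2 (-w) 0
    rw [show -(-w) - (0 : ℝ) = w by ring] at e3
    rw [div_mul_eq_mul_div, eq_div_iff (hX' 0)]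
    have e2 := ident1 0 0
    have h5 : (deriv (deriv (deriv Z)) w * deriv X 0 - deriv (deriv (deriv X)) 0 * deriv Z w) * deriv Y 0 = 0 := by
      linear_combination - deriv X 0 * e3 - deriv Z w * e2
    have h6 := (mul_eq_zero.mp h5).resolve_right (hY' 0)
    linarith
end

section
/- Let b > 0 and pᵢ, qᵢ, rᵢ ∈ ℝ (1 ≤ i ≤ 3), and define X(u) = p₁ + q₁e^{bu} + r₁e^{−bu}, Y(v) = p₂ + q₂e^{bv} + r₂e^{−bv}, Z(w) = p₃ + q₃e^{bw} + r₃e^{−bw}. Then B(u, v, −u−v) = 0 for all u, v ∈ ℝ if and only if the six equations hold: (p₂+p₃)r₁ − 2q₂q₃ = 0, (p₁+p₃)r₂ − 2q₁q₃ = 0, (p₂+p₃)q₁ − 2r₂r₃ = 0, (p₁+p₃)q₂ − 2r₁r₃ = 0, (p₁+p₂)q₃ − 2r₁r₂ = 0, (p₁+p₂)r₃ − 2q₁q₂ = 0. -/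
open Real

private lemma deriv_exp_combo (b p q r u : ℝ) :
    deriv (fun u : ℝ => p + q * Real.exp (b * u) + r * Real.exp (-(b * u))) u
      = q * (b * Real.exp (b * u)) - r * (b * Real.exp (-(b * u))) := by
  have h1 : HasDerivAt (fun u : ℝ => b * u) b u := by
    simpa using (hasDerivAt_id u).const_mul b
  have h2 : HasDerivAt (fun u : ℝ => Real.exp (b * u)) (Real.exp (b * u) * b) u := h1.exp
  have h4 : HasDerivAt (fun u : ℝ => Real.exp (-(b * u))) (Real.exp (-(b * u)) * (-b)) u :=
    h1.neg.exp
  have h5 : HasDerivAt (fun u : ℝ => p + q * Real.exp (b * u) + r * Real.exp (-(b * u)))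
      (q * (Real.exp (b * u) * b) + r * (Real.exp (-(b * u)) * (-b))) u :=
    ((h2.const_mul q).const_add p).add (h4.const_mul r)
  rw [h5.deriv]; ring

theorem separable_minimal_exponential_case
    (b : ℝ) (hb : 0 < b) (p₁ p₂ p₃ q₁ q₂ q₃ r₁ r₂ r₃ : ℝ)
    (X Y Z : ℝ → ℝ)
    (hX : ∀ u, X u = p₁ + q₁ * Real.exp (b * u) + r₁ * Real.exp (-(b * u)))
    (hY : ∀ v, Y v = p₂ + q₂ * Real.exp (b * v) + r₂ * Real.exp (-(b * v)))
    (hZ : ∀ w, Z w = p₃ + q₃ * Real.exp (b * w) + r₃ * Real.exp (-(b * w))) :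
    (∀ u v : ℝ,
      (Y v + Z (-u - v)) * deriv X u + (Z (-u - v) + X u) * deriv Y v
        + (X u + Y v) * deriv Z (-u - v) = 0)
    ↔ ((p₂ + p₃) * r₁ - 2 * q₂ * q₃ = 0 ∧
       (p₁ + p₃) * r₂ - 2 * q₁ * q₃ = 0 ∧
       (p₂ + p₃) * q₁ - 2 * r₂ * r₃ = 0 ∧
       (p₁ + p₃) * q₂ - 2 * r₁ * r₃ = 0 ∧
       (p₁ + p₂) * q₃ - 2 * r₁ * r₂ = 0 ∧
       (p₁ + p₂) * r₃ - 2 * q₁ * q₂ = 0) := by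
  have hbne : b ≠ 0 := hb.ne'
  have hXf : X = fun u : ℝ => p₁ + q₁ * Real.exp (b * u) + r₁ * Real.exp (-(b * u)) :=
    funext hX
  have hYf : Y = fun v : ℝ => p₂ + q₂ * Real.exp (b * v) + r₂ * Real.exp (-(b * v)) :=
    funext hY
  have hZf : Z = fun w : ℝ => p₃ + q₃ * Real.exp (b * w) + r₃ * Real.exp (-(b * w)) :=
    funext hZ
  subst hXf hYf hZf
  -- rewrite the minimality condition as a polynomial identity in s = e^{bu}, t = e^{bv}
  have main : ∀ u v : ℝ,
      ((fun v => p₂ + q₂ * Real.exp (b * v) + r₂ * Real.exp (-(b * v))) v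
          + (fun w => p₃ + q₃ * Real.exp (b * w) + r₃ * Real.exp (-(b * w))) (-u - v)) *
        deriv (fun u => p₁ + q₁ * Real.exp (b * u) + r₁ * Real.exp (-(b * u))) u
      + ((fun w => p₃ + q₃ * Real.exp (b * w) + r₃ * Real.exp (-(b * w))) (-u - v)
          + (fun u => p₁ + q₁ * Real.exp (b * u) + r₁ * Real.exp (-(b * u))) u) *
        deriv (fun v => p₂ + q₂ * Real.exp (b * v) + r₂ * Real.exp (-(b * v))) v
      + ((fun u => p₁ + q₁ * Real.exp (b * u) + r₁ * Real.exp (-(b * u))) u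
          + (fun v => p₂ + q₂ * Real.exp (b * v) + r₂ * Real.exp (-(b * v))) v) *
        deriv (fun w => p₃ + q₃ * Real.exp (b * w) + r₃ * Real.exp (-(b * w))) (-u - v)
      = b * (((p₁ + p₂) * q₃ - 2 * r₁ * r₂) * ((Real.exp (b * u))⁻¹ * (Real.exp (b * v))⁻¹)
          - ((p₂ + p₃) * r₁ - 2 * q₂ * q₃) * (Real.exp (b * u))⁻¹
          - ((p₁ + p₃) * r₂ - 2 * q₁ * q₃) * (Real.exp (b * v))⁻¹
          + ((p₂ + p₃) * q₁ - 2 * r₂ * r₃) * Real.exp (b * u)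
          + ((p₁ + p₃) * q₂ - 2 * r₁ * r₃) * Real.exp (b * v)
          - ((p₁ + p₂) * r₃ - 2 * q₁ * q₂) * (Real.exp (b * u) * Real.exp (b * v))) := by
    intro u v
    rw [deriv_exp_combo, deriv_exp_combo, deriv_exp_combo]
    simp only [Real.exp_neg]
    have e1 : Real.exp (b * (-u - v)) = (Real.exp (b * u))⁻¹ * (Real.exp (b * v))⁻¹ := by
      rw [show b * (-u - v) = -(b * u) + -(b * v) by ring, Real.exp_add, Real.exp_neg,
        Real.exp_neg]
    rw [e1]
    have hu := Real.exp_ne_zero (b * u)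
    have hv := Real.exp_ne_zero (b * v)
    field_simp
    ring
  constructor
  · intro h
    have key : ∀ s t : ℝ, 0 < s → 0 < t →
        s * t * (((p₁ + p₂) * q₃ - 2 * r₁ * r₂)
          - ((p₂ + p₃) * r₁ - 2 * q₂ * q₃) * t
          - ((p₁ + p₃) * r₂ - 2 * q₁ * q₃) * s
          + ((p₂ + p₃) * q₁ - 2 * r₂ * r₃) * (s ^ 2 * t)
          + ((p₁ + p₃) * q₂ - 2 * r₁ * r₃) * (s * t ^ 2)
          - ((p₁ + p₂) * r₃ - 2 * q₁ * q₂) * (s ^ 2 * t ^ 2)) = 0 := by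
      intro s t hs ht
      have hu : Real.exp (b * (Real.log s / b)) = s := by
        rw [mul_div_cancel₀ _ hbne, Real.exp_log hs]
      have hv : Real.exp (b * (Real.log t / b)) = t := by
        rw [mul_div_cancel₀ _ hbne, Real.exp_log ht]
      have h0 := h (Real.log s / b) (Real.log t / b)
      rw [main (Real.log s / b) (Real.log t / b), hu, hv] at h0
      have h0' : ((p₁ + p₂) * q₃ - 2 * r₁ * r₂) * (s⁻¹ * t⁻¹)
          - ((p₂ + p₃) * r₁ - 2 * q₂ * q₃) * s⁻¹
          - ((p₁ + p₃) * r₂ - 2 * q₁ * q₃) * t⁻¹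
          + ((p₂ + p₃) * q₁ - 2 * r₂ * r₃) * s
          + ((p₁ + p₃) * q₂ - 2 * r₁ * r₃) * t
          - ((p₁ + p₂) * r₃ - 2 * q₁ * q₂) * (s * t) = 0 := by
        have := mul_eq_zero.mp h0
        rcases this with h' | h'
        · exact absurd h' hbne
        · exact h'
      have hsne := hs.ne'
      have htne := ht.ne'
      field_simp at h0'
      linear_combination (s * t) * h0'
    have K11 := key 1 1 one_pos one_pos
    have K21 := key 2 1 two_pos one_pos
    have K12 := key 1 2 one_pos two_pos
    have K41 := key 4 1 (by norm_num) one_pos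
    have K14 := key 1 4 one_pos (by norm_num)
    have K22 := key 2 2 two_pos two_pos
    refine ⟨?_, ?_, ?_, ?_, ?_, ?_⟩
    · linear_combination (8/3) * K11 - (1/3) * K21 - (4/3) * K12 + (1/12) * K41 + (1/6) * K14 - (1/12) * K22
    · linear_combination (8/3) * K11 - (4/3) * K21 - (1/3) * K12 + (1/6) * K41 + (1/12) * K14 - (1/12) * K22
    · linear_combination (2/3) * K11 - (1/3) * K21 - (1/12) * K12 + (1/12) * K41 + (1/24) * K14 - (1/12) * K22
    · linear_combination (2/3) * K11 - (1/12) * K21 - (1/3) * K12 + (1/24) * K41 + (1/12) * K14 - (1/12) * K22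
    · linear_combination (16/3) * K11 - (4/3) * K21 - (4/3) * K12 + (1/6) * K41 + (1/6) * K14 - (1/12) * K22
    · linear_combination (1/3) * K11 - (1/12) * K21 - (1/12) * K12 + (1/24) * K41 + (1/24) * K14 - (1/12) * K22
  · rintro ⟨h1, h2, h3, h4, h5, h6⟩ u v
    rw [main u v, h1, h2, h3, h4, h5, h6]
    ring
end

section
/- Let b > 0 and pᵢ, qᵢ, rᵢ ∈ ℝ (1 ≤ i ≤ 3), and define X(u) = p₁ + q₁cos(bu) + r₁sin(bu), Y(v) = p₂ + q₂cos(bv) + r₂sin(bv), Z(w) = p₃ + q₃cos(bw) + r₃sin(bw). Then B(u, v, −u−v) = 0 for all u, v ∈ ℝ if and only if the six equations hold: (p₂+p₃)q₁ − q₂q₃ + r₂r₃ = 0, (p₂+p₃)r₁ + q₂r₃ + q₃r₂ = 0, (p₁+p₃)q₂ − q₁q₃ + r₁r₃ = 0, (p₁+p₃)r₂ + q₁r₃ + q₃r₁ = 0, (p₁+p₂)q₃ − q₁q₂ + r₁r₂ = 0, (p₁+p₂)r₃ + q₁r₂ + q₂r₁ = 0. -/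
open Real

lemma trig_hasDerivAt (b p q r u : ℝ) :
    HasDerivAt (fun u => p + q * Real.cos (b * u) + r * Real.sin (b * u))
      (q * (-Real.sin (b * u) * b) + r * (Real.cos (b * u) * b)) u := by
  have hbu : HasDerivAt (fun u : ℝ => b * u) b u := by
    simpa using (hasDerivAt_id u).const_mul b
  have hc := (Real.hasDerivAt_cos (b * u)).comp u hbu
  have hs := (Real.hasDerivAt_sin (b * u)).comp u hbu
  simpa [Function.comp, Pi.add_def] using ((hasDerivAt_const u p).add (hc.const_mul q)).add (hs.const_mul r)

theorem separable_minimal_trigonometric_case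
    (b : ℝ) (hb : 0 < b) (p₁ p₂ p₃ q₁ q₂ q₃ r₁ r₂ r₃ : ℝ)
    (X Y Z : ℝ → ℝ)
    (hX : ∀ u, X u = p₁ + q₁ * Real.cos (b * u) + r₁ * Real.sin (b * u))
    (hY : ∀ v, Y v = p₂ + q₂ * Real.cos (b * v) + r₂ * Real.sin (b * v))
    (hZ : ∀ w, Z w = p₃ + q₃ * Real.cos (b * w) + r₃ * Real.sin (b * w)) :
    (∀ u v : ℝ,
      (Y v + Z (-u - v)) * deriv X u + (Z (-u - v) + X u) * deriv Y v
        + (X u + Y v) * deriv Z (-u - v) = 0)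
    ↔ ((p₂ + p₃) * q₁ - q₂ * q₃ + r₂ * r₃ = 0 ∧
       (p₂ + p₃) * r₁ + q₂ * r₃ + q₃ * r₂ = 0 ∧
       (p₁ + p₃) * q₂ - q₁ * q₃ + r₁ * r₃ = 0 ∧
       (p₁ + p₃) * r₂ + q₁ * r₃ + q₃ * r₁ = 0 ∧
       (p₁ + p₂) * q₃ - q₁ * q₂ + r₁ * r₂ = 0 ∧
       (p₁ + p₂) * r₃ + q₁ * r₂ + q₂ * r₁ = 0) := by
  have hb' : b ≠ 0 := ne_of_gt hb
  have hXf : X = fun u => p₁ + q₁ * Real.cos (b * u) + r₁ * Real.sin (b * u) := funext hX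
  have hYf : Y = fun v => p₂ + q₂ * Real.cos (b * v) + r₂ * Real.sin (b * v) := funext hY
  have hZf : Z = fun w => p₃ + q₃ * Real.cos (b * w) + r₃ * Real.sin (b * w) := funext hZ
  have hdX : ∀ u, deriv X u = q₁ * (-Real.sin (b * u) * b) + r₁ * (Real.cos (b * u) * b) := by
    intro u; rw [hXf]; exact (trig_hasDerivAt b p₁ q₁ r₁ u).deriv
  have hdY : ∀ v, deriv Y v = q₂ * (-Real.sin (b * v) * b) + r₂ * (Real.cos (b * v) * b) := by
    intro v; rw [hYf]; exact (trig_hasDerivAt b p₂ q₂ r₂ v).deriv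
  have hdZ : ∀ w, deriv Z w = q₃ * (-Real.sin (b * w) * b) + r₃ * (Real.cos (b * w) * b) := by
    intro w; rw [hZf]; exact (trig_hasDerivAt b p₃ q₃ r₃ w).deriv
  have key : ∀ u v : ℝ,
      (Y v + Z (-u - v)) * deriv X u + (Z (-u - v) + X u) * deriv Y v
        + (X u + Y v) * deriv Z (-u - v)
      = b * (-((p₂ + p₃) * q₁ - q₂ * q₃ + r₂ * r₃) * Real.sin (b * u)
           + ((p₂ + p₃) * r₁ + q₂ * r₃ + q₃ * r₂) * Real.cos (b * u)
           - ((p₁ + p₃) * q₂ - q₁ * q₃ + r₁ * r₃) * Real.sin (b * v)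
           + ((p₁ + p₃) * r₂ + q₁ * r₃ + q₃ * r₁) * Real.cos (b * v)
           + ((p₁ + p₂) * q₃ - q₁ * q₂ + r₁ * r₂)
              * (Real.sin (b * u) * Real.cos (b * v) + Real.cos (b * u) * Real.sin (b * v))
           + ((p₁ + p₂) * r₃ + q₁ * r₂ + q₂ * r₁)
              * (Real.cos (b * u) * Real.cos (b * v) - Real.sin (b * u) * Real.sin (b * v))) := by
    intro u v
    have hw : b * (-u - v) = -(b * u + b * v) := by ring
    rw [hX, hY, hZ, hdX, hdY, hdZ, hw, Real.cos_neg, Real.sin_neg, Real.cos_add, Real.sin_add]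
    have h1 := Real.sin_sq_add_cos_sq (b * u)
    have h2 := Real.sin_sq_add_cos_sq (b * v)
    linear_combination
      (b * ((q₁ * q₃ - r₁ * r₃) * Real.sin (b * v) + (q₃ * r₁ + q₁ * r₃) * Real.cos (b * v))) * h1
      + (b * ((q₂ * q₃ - r₂ * r₃) * Real.sin (b * u) + (q₃ * r₂ + q₂ * r₃) * Real.cos (b * u))) * h2
  constructor
  · intro h
    have h' : ∀ u v : ℝ,
        (-((p₂ + p₃) * q₁ - q₂ * q₃ + r₂ * r₃) * Real.sin (b * u)
           + ((p₂ + p₃) * r₁ + q₂ * r₃ + q₃ * r₂) * Real.cos (b * u)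
           - ((p₁ + p₃) * q₂ - q₁ * q₃ + r₁ * r₃) * Real.sin (b * v)
           + ((p₁ + p₃) * r₂ + q₁ * r₃ + q₃ * r₁) * Real.cos (b * v)
           + ((p₁ + p₂) * q₃ - q₁ * q₂ + r₁ * r₂)
              * (Real.sin (b * u) * Real.cos (b * v) + Real.cos (b * u) * Real.sin (b * v))
           + ((p₁ + p₂) * r₃ + q₁ * r₂ + q₂ * r₁)
              * (Real.cos (b * u) * Real.cos (b * v) - Real.sin (b * u) * Real.sin (b * v))) = 0 := by
      intro u v
      have := h u v
      rw [key u v] at this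
      exact (mul_eq_zero.mp this).resolve_left hb'
    have hbpi : b * (π / b) = π := by field_simp
    have hbpi2 : b * (π / 2 / b) = π / 2 := by field_simp
    have e1 := h' 0 0
    have e2 := h' (π / b) 0
    have e3 := h' 0 (π / b)
    have e4 := h' (π / 2 / b) 0
    have e5 := h' 0 (π / 2 / b)
    have e6 := h' (π / 2 / b) (π / 2 / b)
    simp only [mul_zero, Real.sin_zero, Real.cos_zero, hbpi, hbpi2, Real.sin_pi, Real.cos_pi,
      Real.sin_pi_div_two, Real.cos_pi_div_two] at e1 e2 e3 e4 e5 e6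
    refine ⟨by linarith, by linarith, by linarith, by linarith, by linarith, by linarith⟩
  · rintro ⟨h1, h2, h3, h4, h5, h6⟩ u v
    rw [key u v, h1, h2, h3, h4, h5, h6]
    ring
end

section
/- Let pᵢ, qᵢ, rᵢ ∈ ℝ (1 ≤ i ≤ 3), and define X(u) = p₁ + q₁u + r₁u², Y(v) = p₂ + q₂v + r₂v², Z(w) = p₃ + q₃w + r₃w². Then B(u, v, −u−v) = 0 for all u, v ∈ ℝ if and only if the six equations hold: (p₂+p₃)q₁ + (p₁+p₃)q₂ + (p₁+p₂)q₃ = 0, 2(p₂+p₃)r₁ − 2(p₁+p₂)r₃ + q₂(q₁−q₃) = 0, 2(p₁+p₃)r₂ − 2(p₁+p₂)r₃ + q₁(q₂−q₃) = 0, (q₂−q₃)r₁ − (q₁−q₂)r₃ = 0, (q₁−q₃)r₂ + (q₁−q₂)r₃ = 0, r₁r₂ + r₁r₃ + r₂r₃ = 0. -/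
lemma deriv_quad (p q r : ℝ) (u : ℝ) :
    deriv (fun x : ℝ => p + q * x + r * x ^ 2) u = q + 2 * r * u := by
  have h : HasDerivAt (fun x : ℝ => p + q * x + r * x ^ 2) (q + 2 * r * u) u := by
    have h1 : HasDerivAt (fun x : ℝ => p + q * x) (q * 1) u :=
      ((hasDerivAt_id u).const_mul q).const_add p
    have h2 : HasDerivAt (fun x : ℝ => r * x ^ 2) (r * (2 * u ^ 1)) u :=
      (hasDerivAt_pow 2 u).const_mul r
    have := h1.add h2
    exact this.congr_deriv (by ring)
  exact h.deriv

theorem separable_minimal_quadratic_case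
    (p₁ p₂ p₃ q₁ q₂ q₃ r₁ r₂ r₃ : ℝ)
    (X Y Z : ℝ → ℝ)
    (hX : ∀ u, X u = p₁ + q₁ * u + r₁ * u ^ 2)
    (hY : ∀ v, Y v = p₂ + q₂ * v + r₂ * v ^ 2)
    (hZ : ∀ w, Z w = p₃ + q₃ * w + r₃ * w ^ 2) :
    (∀ u v : ℝ,
      (Y v + Z (-u - v)) * deriv X u + (Z (-u - v) + X u) * deriv Y v
        + (X u + Y v) * deriv Z (-u - v) = 0)
    ↔ ((p₂ + p₃) * q₁ + (p₁ + p₃) * q₂ + (p₁ + p₂) * q₃ = 0 ∧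
       2 * (p₂ + p₃) * r₁ - 2 * (p₁ + p₂) * r₃ + q₂ * (q₁ - q₃) = 0 ∧
       2 * (p₁ + p₃) * r₂ - 2 * (p₁ + p₂) * r₃ + q₁ * (q₂ - q₃) = 0 ∧
       (q₂ - q₃) * r₁ - (q₁ - q₂) * r₃ = 0 ∧
       (q₁ - q₃) * r₂ + (q₁ - q₂) * r₃ = 0 ∧
       r₁ * r₂ + r₁ * r₃ + r₂ * r₃ = 0) := by
  have hXf : X = fun u : ℝ => p₁ + q₁ * u + r₁ * u ^ 2 := funext hX
  have hYf : Y = fun v : ℝ => p₂ + q₂ * v + r₂ * v ^ 2 := funext hY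
  have hZf : Z = fun w : ℝ => p₃ + q₃ * w + r₃ * w ^ 2 := funext hZ
  have dX : ∀ u : ℝ, deriv X u = q₁ + 2 * r₁ * u := by
    intro u; rw [hXf]; exact deriv_quad _ _ _ _
  have dY : ∀ v : ℝ, deriv Y v = q₂ + 2 * r₂ * v := by
    intro v; rw [hYf]; exact deriv_quad _ _ _ _
  have dZ : ∀ w : ℝ, deriv Z w = q₃ + 2 * r₃ * w := by
    intro w; rw [hZf]; exact deriv_quad _ _ _ _
  have key : ∀ u v : ℝ,
      (Y v + Z (-u - v)) * deriv X u + (Z (-u - v) + X u) * deriv Y v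
        + (X u + Y v) * deriv Z (-u - v)
      = (p₂ + q₂ * v + r₂ * v ^ 2 + (p₃ + q₃ * (-u - v) + r₃ * (-u - v) ^ 2))
          * (q₁ + 2 * r₁ * u)
        + (p₃ + q₃ * (-u - v) + r₃ * (-u - v) ^ 2 + (p₁ + q₁ * u + r₁ * u ^ 2))
          * (q₂ + 2 * r₂ * v)
        + (p₁ + q₁ * u + r₁ * u ^ 2 + (p₂ + q₂ * v + r₂ * v ^ 2))
          * (q₃ + 2 * r₃ * (-u - v)) := by
    intro u v
    rw [hX, hY, hZ, dX, dY, dZ]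
  constructor
  · intro h
    have hB : ∀ u v : ℝ,
        (p₂ + q₂ * v + r₂ * v ^ 2 + (p₃ + q₃ * (-u - v) + r₃ * (-u - v) ^ 2))
            * (q₁ + 2 * r₁ * u)
          + (p₃ + q₃ * (-u - v) + r₃ * (-u - v) ^ 2 + (p₁ + q₁ * u + r₁ * u ^ 2))
            * (q₂ + 2 * r₂ * v)
          + (p₁ + q₁ * u + r₁ * u ^ 2 + (p₂ + q₂ * v + r₂ * v ^ 2))
            * (q₃ + 2 * r₃ * (-u - v)) = 0 := by
      intro u v
      rw [← key u v]
      exact h u v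
    refine ⟨?_, ?_, ?_, ?_, ?_, ?_⟩
    · linear_combination hB 0 0
    · linear_combination (1/2 : ℝ) * hB 1 0 - (1/2 : ℝ) * hB (-1) 0
    · linear_combination (1/2 : ℝ) * hB 0 1 - (1/2 : ℝ) * hB 0 (-1)
    · linear_combination (-1 : ℝ) * hB 0 0 + (1/2 : ℝ) * hB 1 0 + (1/2 : ℝ) * hB (-1) 0
    · linear_combination (-1 : ℝ) * hB 0 0 + (1/2 : ℝ) * hB 0 1 + (1/2 : ℝ) * hB 0 (-1)
    · linear_combination (-1/8 : ℝ) * hB 1 0 + (1/8 : ℝ) * hB (-1) 0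
        - (1/8 : ℝ) * hB 0 1 + (1/8 : ℝ) * hB 0 (-1)
        + (1/8 : ℝ) * hB 1 1 - (1/8 : ℝ) * hB (-1) (-1)
  · rintro ⟨h1, h2, h3, h4, h5, h6⟩ u v
    rw [key u v]
    linear_combination h1 + u * h2 + v * h3 + (u ^ 2 + 2 * u * v) * h4
      + (v ^ 2 + 2 * u * v) * h5 + 2 * (u ^ 2 * v + u * v ^ 2) * h6
end

section
/- Let p₁, p₂, p₃ ∈ ℝ and s₁, s₂, s₃ ∈ ℂ satisfy (p₂+p₃)·s₁ = conj(s₂)·conj(s₃), (p₁+p₃)·s₂ = conj(s₁)·conj(s₃), and (p₁+p₂)·s₃ = conj(s₁)·conj(s₂). If s₃ ≠ 0 then |s₂|² = (p₁+p₂)(p₂+p₃), and if s₂ ≠ 0 then |s₃|² = (p₁+p₃)(p₂+p₃). -/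
open Complex in
lemma trig_aux (a b : ℝ) (s₁ s₂ s₃ : ℂ)
    (h₁ : (b : ℂ) * s₁ = (starRingEnd ℂ) s₂ * (starRingEnd ℂ) s₃)
    (h₃ : (a : ℂ) * s₃ = (starRingEnd ℂ) s₁ * (starRingEnd ℂ) s₂)
    (hs3 : s₃ ≠ 0) : ‖s₂‖ ^ 2 = a * b := by
  by_cases hs1 : s₁ = 0
  · have h1' : (starRingEnd ℂ) s₂ * (starRingEnd ℂ) s₃ = 0 := by rw [← h₁, hs1, mul_zero]
    have hs2 : s₂ = 0 := by
      rcases mul_eq_zero.mp h1' with h | h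
      · simpa using h
      · exact absurd (by simpa using h) hs3
    have ha : (a : ℂ) = 0 := by
      have : (a : ℂ) * s₃ = 0 := by rw [h₃, hs1]; simp
      exact (mul_eq_zero.mp this).resolve_right hs3
    have ha' : a = 0 := by exact_mod_cast ha
    simp [hs2, ha']
  · have hconj : (a : ℂ) * (starRingEnd ℂ) s₃ = s₁ * s₂ := by
      have := congrArg (starRingEnd ℂ) h₃
      simpa [map_mul] using this
    have key : ((a * b : ℝ) : ℂ) * s₁ = ((‖s₂‖ ^ 2 : ℝ) : ℂ) * s₁ := by
      have : ((a : ℂ) * b) * s₁ = (a : ℂ) * ((starRingEnd ℂ) s₂ * (starRingEnd ℂ) s₃) := by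
        rw [← h₁]; ring
      rw [Complex.ofReal_mul, this]
      have : (a : ℂ) * ((starRingEnd ℂ) s₂ * (starRingEnd ℂ) s₃)
          = (starRingEnd ℂ) s₂ * ((a : ℂ) * (starRingEnd ℂ) s₃) := by ring
      rw [this, hconj, Complex.sq_norm, ← Complex.mul_conj]
      ring
    have := mul_right_cancel₀ hs1 key
    exact_mod_cast this.symm

theorem trigonometric_coefficient_moduli
    (p₁ p₂ p₃ : ℝ) (s₁ s₂ s₃ : ℂ)
    (h₁ : ((p₂ : ℂ) + p₃) * s₁ = (starRingEnd ℂ) s₂ * (starRingEnd ℂ) s₃)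
    (h₂ : ((p₁ : ℂ) + p₃) * s₂ = (starRingEnd ℂ) s₁ * (starRingEnd ℂ) s₃)
    (h₃ : ((p₁ : ℂ) + p₂) * s₃ = (starRingEnd ℂ) s₁ * (starRingEnd ℂ) s₂) :
    (s₃ ≠ 0 → ‖s₂‖ ^ 2 = (p₁ + p₂) * (p₂ + p₃)) ∧
    (s₂ ≠ 0 → ‖s₃‖ ^ 2 = (p₁ + p₃) * (p₂ + p₃)) := by
  constructor
  · intro hs3
    exact trig_aux (p₁ + p₂) (p₂ + p₃) s₁ s₂ s₃ (by push_cast; linear_combination h₁)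
      (by push_cast; linear_combination h₃) hs3
  · intro hs2
    exact trig_aux (p₁ + p₃) (p₂ + p₃) s₁ s₃ s₂ (by push_cast; linear_combination h₁)
      (by push_cast; linear_combination h₂) hs2
end

section
/- Define X(u) = u² − 1, Y(v) = v² − 1, and Z(w) = 2 − w²/2. Then for all u, v ∈ ℝ, with w = −u − v, one has (Y(v)+Z(w))·X'(u) + (Z(w)+X(u))·Y'(v) + (X(u)+Y(v))·Z'(w) = 0. -/
theorem separable_minimal_example_quadratic :
    ∀ u v : ℝ,
      let X : ℝ → ℝ := fun u => u ^ 2 - 1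
      let Y : ℝ → ℝ := fun v => v ^ 2 - 1
      let Z : ℝ → ℝ := fun w => 2 - w ^ 2 / 2
      let w := -u - v
      (Y v + Z w) * deriv X u + (Z w + X u) * deriv Y v
        + (X u + Y v) * deriv Z w = 0 := by
  intro u v X Y Z w
  have hX : deriv X u = 2 * u := by
    simp [X]
  have hY : deriv Y v = 2 * v := by
    simp [Y]
  have hZ : deriv Z w = -w := by
    have : Z = fun x => 2 - x ^ 2 / 2 := rfl
    rw [this]
    have : deriv (fun x : ℝ => 2 - x ^ 2 / 2) w
        = deriv (fun _ : ℝ => (2:ℝ)) w - deriv (fun x : ℝ => x ^ 2 / 2) w := by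
      apply deriv_sub
      · exact differentiableAt_const _
      · exact (differentiableAt_pow 2).div_const _
    rw [this]
    simp [deriv_div_const]
  rw [hX, hY, hZ]
  simp only [X, Y, Z, w]
  ring
end

section
/- Define X(u) = 1 − 2·sin(u), Y(v) = 1 + √2·cos(v) + √2·sin(v), and Z(w) = 1 + √2·cos(w) + √2·sin(w). Then for all u, v ∈ ℝ, with w = −u − v, one has (Y(v)+Z(w))·X'(u) + (Z(w)+X(u))·Y'(v) + (X(u)+Y(v))·Z'(w) = 0. -/
open Real

theorem separable_minimal_example_trigonometric :
    ∀ u v : ℝ,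
      let X : ℝ → ℝ := fun u => 1 - 2 * Real.sin u
      let Y : ℝ → ℝ := fun v => 1 + Real.sqrt 2 * Real.cos v + Real.sqrt 2 * Real.sin v
      let Z : ℝ → ℝ := fun w => 1 + Real.sqrt 2 * Real.cos w + Real.sqrt 2 * Real.sin w
      let w := -u - v
      (Y v + Z w) * deriv X u + (Z w + X u) * deriv Y v
        + (X u + Y v) * deriv Z w = 0 := by
  intro u v X Y Z w
  have hX : deriv X u = -(2 * Real.cos u) := by
    have h : HasDerivAt X (-(2 * Real.cos u)) u := by
      simpa using ((Real.hasDerivAt_sin u).const_mul 2).const_sub 1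
    exact h.deriv
  have hYZ : ∀ t : ℝ, deriv Y t = Real.sqrt 2 * (-Real.sin t) + Real.sqrt 2 * Real.cos t := by
    intro t
    have h : HasDerivAt Y (Real.sqrt 2 * (-Real.sin t) + Real.sqrt 2 * Real.cos t) t := by
      have h1 := ((Real.hasDerivAt_cos t).const_mul (Real.sqrt 2)).const_add 1
      have h2 := (Real.hasDerivAt_sin t).const_mul (Real.sqrt 2)
      exact h1.add h2
    exact h.deriv
  have hZ : deriv Z w = Real.sqrt 2 * (-Real.sin w) + Real.sqrt 2 * Real.cos w := hYZ w
  have hr : Real.sqrt 2 * Real.sqrt 2 = 2 := Real.mul_self_sqrt (by norm_num)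
  have hcw : Real.cos w = Real.cos u * Real.cos v - Real.sin u * Real.sin v := by
    have : w = -(u + v) := by simp [w]; ring
    rw [this, Real.cos_neg, Real.cos_add]
  have hsw : Real.sin w = -(Real.sin u * Real.cos v + Real.cos u * Real.sin v) := by
    have : w = -(u + v) := by simp [w]; ring
    rw [this, Real.sin_neg, Real.sin_add]
  have pu := Real.sin_sq_add_cos_sq u
  have pv := Real.sin_sq_add_cos_sq v
  simp only [X, Y, Z, hX, hYZ, hZ, hcw, hsw]
  linear_combination (-2 * Real.sqrt 2 * (Real.cos v - Real.sin v)) * pu + (4 * Real.cos u) * pv + (2 * Real.cos u * (Real.cos v ^ 2 + Real.sin v ^ 2)) * hr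
end

section
/- Let m ≥ 2 be an integer, let f : U → ℝ be a smooth function on an open set U ⊆ ℝ², and set Φ(x₁,x₂,x₃) = x₁^{2m} + x₂^{2m} + x₃^{2m}. At each point of U define A = 1 + f_u^{2m/(2m−1)} + f_v^{2m/(2m−1)} and η = A^{−1/(2m)}·( −f_u^{1/(2m−1)}, −f_v^{1/(2m−1)}, 1 ) ∈ ℝ³. Then (i) Φ(η) = 1, i.e. η lies on the unit sphere of the norm ‖·‖_{2m}, and (ii) the gradient of Φ at η equals 2m·A^{−(2m−1)/(2m)}·( (1,0,f_u) × (0,1,f_v) ), where × is the standard cross product in ℝ³; in particular grad Φ(η) is a positive multiple of (1,0,f_u) × (0,1,f_v). -/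
lemma rootPow_eq_pow (m k : ℕ) (x : ℝ) : rootPow m x k = (rootPow m x 1) ^ k := by
  simp [rootPow]

lemma rootPow_base_pow_eq_self (m : ℕ) (hm : 1 ≤ m) (x : ℝ) :
    (rootPow m x 1) ^ (2 * m - 1) = x := by
  have h2m : (0:ℝ) < 2 * (m:ℝ) - 1 := by
    have : (1:ℝ) ≤ (m:ℝ) := by exact_mod_cast hm
    linarith
  have hcast : ((2 * m - 1 : ℕ) : ℝ) = 2 * (m:ℝ) - 1 := by
    push_cast [Nat.cast_sub (by omega : 1 ≤ 2 * m)]; ring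
  have hodd : Odd (2 * m - 1) := ⟨m - 1, by omega⟩
  rcases eq_or_ne x 0 with rfl | hx
  · simp [rootPow, zero_pow (by omega : 2 * m - 1 ≠ 0)]
  · have hsign : Real.sign x ^ (2 * m - 1) = Real.sign x := by
      rcases Real.sign_apply_eq_of_ne_zero x hx with h | h <;> rw [h] <;>
        simp [hodd.neg_one_pow]
    have habs : (|x| ^ ((2 * (m : ℝ) - 1)⁻¹)) ^ (2 * m - 1) = |x| := by
      rw [← Real.rpow_natCast (|x| ^ ((2 * (m : ℝ) - 1)⁻¹)),
        ← Real.rpow_mul (abs_nonneg x), hcast, inv_mul_cancel₀ (ne_of_gt h2m),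
        Real.rpow_one]
    have hsign_abs : Real.sign x * |x| = x := by
      rcases lt_or_gt_of_ne hx with h | h
      · rw [Real.sign_of_neg h, abs_of_neg h]; ring
      · rw [Real.sign_of_pos h, abs_of_pos h]; ring
    rw [rootPow, pow_one, mul_pow, hsign, habs, hsign_abs]

lemma rootPow_even_nonneg (m : ℕ) (x : ℝ) : 0 ≤ rootPow m x (2 * m) := by
  rw [rootPow, pow_mul']
  exact sq_nonneg _
theorem birkhoff_gauss_map_of_graph_surface
    (m : ℕ) (hm : 2 ≤ m) (U : Set (ℝ × ℝ)) (hU : IsOpen U)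
    (f : ℝ × ℝ → ℝ) (hf : ContDiffOn ℝ (⊤ : ℕ∞) f U)
    (Φ : (Fin 3 → ℝ) → ℝ)
    (hΦ : ∀ x : Fin 3 → ℝ, Φ x = x 0 ^ (2 * m) + x 1 ^ (2 * m) + x 2 ^ (2 * m)) :
    ∀ p ∈ U,
      let fu := fderiv ℝ f p (1, 0)
      let fv := fderiv ℝ f p (0, 1)
      let A : ℝ := 1 + rootPow m fu (2 * m) + rootPow m fv (2 * m)
      let η : Fin 3 → ℝ :=
        A ^ (-(1 : ℝ) / (2 * m)) • ![-(rootPow m fu 1), -(rootPow m fv 1), 1]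
      Φ η = 1 ∧
      (fun i => fderiv ℝ Φ η (Pi.single i 1))
        = (2 * (m : ℝ) * A ^ (-(2 * (m : ℝ) - 1) / (2 * m)))
            • (crossProduct ![1, 0, fu] ![0, 1, fv]) ∧
      ∃ c : ℝ, 0 < c ∧
        (fun i => fderiv ℝ Φ η (Pi.single i 1))
          = c • (crossProduct ![1, 0, fu] ![0, 1, fv]) := by
  have hΦ' : Φ = fun x : Fin 3 → ℝ => x 0 ^ (2 * m) + x 1 ^ (2 * m) + x 2 ^ (2 * m) :=
    funext hΦ
  have hgrad : ∀ (x : Fin 3 → ℝ) (j : Fin 3),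
      fderiv ℝ Φ x (Pi.single j 1) = ((2 * m : ℕ) : ℝ) * x j ^ (2 * m - 1) := by
    intro x j
    have h : ∀ i : Fin 3, HasFDerivAt (fun y : Fin 3 → ℝ => y i ^ (2 * m))
        ((((2 * m : ℕ) : ℝ) * x i ^ (2 * m - 1)) •
          (ContinuousLinearMap.proj i : (Fin 3 → ℝ) →L[ℝ] ℝ)) x := fun i =>
      (hasDerivAt_pow (2 * m) (x i)).comp_hasFDerivAt x (hasFDerivAt_apply i x)
    have hsum : HasFDerivAt Φ
        (((((2 * m : ℕ) : ℝ) * x 0 ^ (2 * m - 1)) •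
            (ContinuousLinearMap.proj 0 : (Fin 3 → ℝ) →L[ℝ] ℝ) +
          (((2 * m : ℕ) : ℝ) * x 1 ^ (2 * m - 1)) •
            (ContinuousLinearMap.proj 1 : (Fin 3 → ℝ) →L[ℝ] ℝ)) +
          (((2 * m : ℕ) : ℝ) * x 2 ^ (2 * m - 1)) •
            (ContinuousLinearMap.proj 2 : (Fin 3 → ℝ) →L[ℝ] ℝ)) x := by
      rw [hΦ']; exact ((h 0).add (h 1)).add (h 2)
    rw [hsum.fderiv]
    fin_cases j <;>
      simp [ContinuousLinearMap.add_apply, ContinuousLinearMap.smul_apply,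
        ContinuousLinearMap.proj_apply, Pi.single_apply]
  intro p hp fu fv A η
  have hmR : (2:ℝ) ≤ (m:ℝ) := by exact_mod_cast hm
  have hA1 : (1:ℝ) ≤ A := by
    have h1 := rootPow_even_nonneg m fu
    have h2 := rootPow_even_nonneg m fv
    show (1:ℝ) ≤ 1 + rootPow m fu (2 * m) + rootPow m fv (2 * m)
    linarith
  have hA0 : (0:ℝ) < A := lt_of_lt_of_le one_pos hA1
  have hm2 : (0:ℝ) < 2 * (m:ℝ) := by linarith
  have hcast : ((2 * m - 1 : ℕ) : ℝ) = 2 * (m:ℝ) - 1 := by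
    push_cast [Nat.cast_sub (by omega : 1 ≤ 2 * m)]; ring
  set c : ℝ := A ^ (-(1 : ℝ) / (2 * m)) with hc
  have hη0 : η 0 = c * (-(rootPow m fu 1)) := rfl
  have hη1 : η 1 = c * (-(rootPow m fv 1)) := rfl
  have hη2 : η 2 = c * 1 := rfl
  have hceven : c ^ (2 * m) = A⁻¹ := by
    rw [hc, ← Real.rpow_natCast (A ^ _) (2 * m), ← Real.rpow_mul hA0.le]
    have : (-(1:ℝ) / (2 * m)) * ((2 * m : ℕ) : ℝ) = -1 := by
      push_cast; field_simp
    rw [this, Real.rpow_neg_one]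
  have hcodd : c ^ (2 * m - 1) = A ^ (-(2 * (m:ℝ) - 1) / (2 * m)) := by
    rw [hc, ← Real.rpow_natCast (A ^ _) (2 * m - 1), ← Real.rpow_mul hA0.le]
    congr 1
    rw [hcast]; field_simp
  have hodd : Odd (2 * m - 1) := ⟨m - 1, by omega⟩
  have heven : Even (2 * m) := even_two_mul m
  have hru : (rootPow m fu 1) ^ (2 * m - 1) = fu :=
    rootPow_base_pow_eq_self m (by omega) fu
  have hrv : (rootPow m fv 1) ^ (2 * m - 1) = fv :=
    rootPow_base_pow_eq_self m (by omega) fv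
  have hpart1 : Φ η = 1 := by
    rw [hΦ η, hη0, hη1, hη2, mul_pow, mul_pow, mul_pow, heven.neg_pow, heven.neg_pow,
      ← rootPow_eq_pow, ← rootPow_eq_pow, hceven]
    have hAeq : (1:ℝ) + rootPow m fu (2 * m) + rootPow m fv (2 * m) = A := rfl
    field_simp
    linarith [hAeq, (one_pow (2 * m) : (1:ℝ) ^ (2 * m) = 1)]
  have hcross : (crossProduct ![1, 0, fu]) ![0, 1, fv] = ![-fu, -fv, 1] := by
    funext i; fin_cases i <;> simp [cross_apply]
  have e0 : η 0 ^ (2 * m - 1) = A ^ (-(2 * (m:ℝ) - 1) / (2 * m)) * (-fu) := by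
    rw [hη0, mul_pow, hodd.neg_pow, hru, hcodd]
  have e1 : η 1 ^ (2 * m - 1) = A ^ (-(2 * (m:ℝ) - 1) / (2 * m)) * (-fv) := by
    rw [hη1, mul_pow, hodd.neg_pow, hrv, hcodd]
  have e2 : η 2 ^ (2 * m - 1) = A ^ (-(2 * (m:ℝ) - 1) / (2 * m)) * 1 := by
    rw [hη2, mul_pow, hcodd, one_pow]
  have hpart2 : (fun i => fderiv ℝ Φ η (Pi.single i 1))
      = (2 * (m : ℝ) * A ^ (-(2 * (m : ℝ) - 1) / (2 * m)))
          • (crossProduct ![1, 0, fu] ![0, 1, fv]) := by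
    funext j
    rw [hgrad η j, hcross]
    fin_cases j
    · show ((2 * m : ℕ) : ℝ) * η 0 ^ (2 * m - 1)
        = 2 * (m : ℝ) * A ^ (-(2 * (m : ℝ) - 1) / (2 * m)) * (-fu)
      rw [e0]; push_cast; ring
    · show ((2 * m : ℕ) : ℝ) * η 1 ^ (2 * m - 1)
        = 2 * (m : ℝ) * A ^ (-(2 * (m : ℝ) - 1) / (2 * m)) * (-fv)
      rw [e1]; push_cast; ring
    · show ((2 * m : ℕ) : ℝ) * η 2 ^ (2 * m - 1)
        = 2 * (m : ℝ) * A ^ (-(2 * (m : ℝ) - 1) / (2 * m)) * 1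
      rw [e2]; push_cast; ring
  refine ⟨hpart1, hpart2, 2 * (m : ℝ) * A ^ (-(2 * (m : ℝ) - 1) / (2 * m)), ?_, hpart2⟩
  exact mul_pos hm2 (Real.rpow_pos_of_pos hA0 _)
end
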